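/- arXiv:2603.07359 — 7 statements merged into one kernel-verified Lean document; each statement's English description precedes it below -/
import Mathlib

section
/- For every integer m ≥ 1 and every real p ∈ (0,∞), there exists a complex-linear map Φ from the space of m×m complex matrices to the space of m²×m² complex matrices such that Tr((Φ(A)*Φ(A))^{p/2}) = (Tr(A*A))^{p/2} for all m×m complex matrices A, and moreover the operator norm of Φ(A) equals (Tr(A*A))^{1/2}. In other words, S_2^m embeds isometrically into S_p^{m²} for every p ∈ (0,∞]. -/
/-!
Let `Φ(A)` be the `m² × m²` matrix whose first column is the vectorisation of `A` and whose
other columns vanish. Then `Φ(A)ᴴ Φ(A) = ‖A‖₂² E₁₁`, so `Φ(A)` has exactly one nonzero singular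
value, namely `‖A‖₂`, and every Schatten norm of `Φ(A)`, the operator norm included, is `‖A‖₂`.
-/

open scoped Matrix

/-- `Tr((AᴴA)^{p/2})`, computed as the sum of the `p/2`-th powers (real powers) of the
eigenvalues of the positive semidefinite matrix `AᴴA`; this equals `‖A‖_p^p`, the `p`-th
power of the Schatten `p`-(quasi-)norm of `A`. -/
noncomputable def schattenSum (p : ℝ) {n : ℕ} (A : Matrix (Fin n) (Fin n) ℂ) : ℝ :=
  ∑ i, (Matrix.isHermitian_conjTranspose_mul_self A).eigenvalues i ^ (p / 2)

/-- The operator norm of a matrix acting on `ℓ_2^n(ℂ)`, i.e. `‖A‖_∞`. -/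
noncomputable def opNormMat {n : ℕ} (A : Matrix (Fin n) (Fin n) ℂ) : ℝ :=
  ‖Matrix.toEuclideanCLM (𝕜 := ℂ) A‖

open scoped ComplexOrder

namespace Matrix

variable {𝕜 R m n k : Type*}

theorem IsHermitian.sum_comp_eigenvalues_of_eq_diagonal [RCLike 𝕜] [Fintype n] [DecidableEq n]
    {H : Matrix n n 𝕜} (hH : H.IsHermitian) {d : n → ℝ} (hd : H = diagonal fun i => (d i : 𝕜))
    (f : ℝ → ℝ) :
    ∑ i, f (hH.eigenvalues i) = ∑ i, f (d i) := by
  have hroots : (Finset.univ.val.map hH.eigenvalues).map (RCLike.ofReal : ℝ → 𝕜) =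
      (Finset.univ.val.map d).map (RCLike.ofReal : ℝ → 𝕜) := by
    rw [Multiset.map_map, ← hH.roots_charpoly_eq_eigenvalues, hd, charpoly_diagonal,
      Polynomial.roots_prod _ _ (by simp [Finset.prod_ne_zero_iff, Polynomial.X_sub_C_ne_zero])]
    simp
  have hmap := Multiset.map_injective (RCLike.ofReal_injective (K := 𝕜)) hroots
  simpa only [Finset.sum_eq_multiset_sum, Multiset.map_map, Function.comp_def] using
    congrArg (fun s => (s.map f).sum) hmap

theorem ofReal_re_dotProduct_star_self [RCLike 𝕜] [Fintype n] (v : n → 𝕜) :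
    (RCLike.re (star v ⬝ᵥ v) : 𝕜) = star v ⬝ᵥ v :=
  RCLike.conj_eq_iff_re.mp <| RCLike.conj_eq_iff_im.mpr <|
    (RCLike.nonneg_iff.mp (dotProduct_star_self_nonneg v)).2

theorem conjTranspose_vecMulVec_single_mul_self [CommSemiring R] [StarRing R] [Fintype n]
    [DecidableEq n] (v : n → R) (z : n) :
    (vecMulVec v (Pi.single z 1))ᴴ * vecMulVec v (Pi.single z 1) =
      diagonal (Pi.single z (star v ⬝ᵥ v)) := by
  rw [conjTranspose_vecMulVec, vecMulVec_mul_vecMulVec, Pi.star_single, star_one,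
    ← Pi.single_smul', smul_eq_mul, mul_one, diagonal_single]
  ext i j
  simp only [vecMulVec_apply, single_apply, Pi.single_apply]
  grind

theorem star_vec_comp_dotProduct_vec_comp [NonUnitalNonAssocSemiring R] [Star R] [Fintype m]
    [Fintype n] [Fintype k] (e : n × m ≃ k) (A : Matrix m n R) :
    star (vec A ∘ e.symm) ⬝ᵥ (vec A ∘ e.symm) = (Aᴴ * A).trace := by
  rw [← star_vec_dotProduct_vec, dotProduct_comp_equiv_symm]
  congr 1
  ext i
  simp

variable (R) in
@[simps]
def vecToColumn [Semiring R] [DecidableEq k] (e : n × m ≃ k) (z : k) :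
    Matrix m n R →ₗ[R] Matrix k k R where
  toFun A := vecMulVec (vec A ∘ e.symm) (Pi.single z 1)
  map_add' A B := by ext; simp [vec_add, vecMulVec_apply, add_mul]
  map_smul' c A := by ext; simp [vec_smul, vecMulVec_apply, mul_assoc]

end Matrix

open Matrix

section

variable {N : ℕ}

theorem schattenSum_vecMulVec_single {p : ℝ} (hp : p ≠ 0) (v : Fin N → ℂ) (z : Fin N) :
    schattenSum p (vecMulVec v (Pi.single z 1)) = (star v ⬝ᵥ v).re ^ (p / 2) := by
  have hdiag : (vecMulVec v (Pi.single z 1))ᴴ * vecMulVec v (Pi.single z 1) =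
      diagonal fun i => ((Pi.single z (star v ⬝ᵥ v).re : Fin N → ℝ) i : ℂ) := by
    rw [conjTranspose_vecMulVec_single_mul_self]
    congr 1
    ext i
    rcases eq_or_ne i z with rfl | hi
    · simpa using (ofReal_re_dotProduct_star_self v).symm
    · simp [hi]
  rw [schattenSum, IsHermitian.sum_comp_eigenvalues_of_eq_diagonal
    (d := Pi.single z (star v ⬝ᵥ v).re) _ hdiag (· ^ (p / 2))]
  refine (Fintype.sum_eq_single z fun i hi => ?_).trans (by simp)
  simp [hi, Real.zero_rpow (div_ne_zero hp two_ne_zero)]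

open scoped Matrix.Norms.L2Operator in
theorem opNormMat_vecMulVec_single (v : Fin N → ℂ) (z : Fin N) :
    opNormMat (vecMulVec v (Pi.single z 1)) = √(star v ⬝ᵥ v).re := by
  set M := vecMulVec v (Pi.single z 1)
  have hM : ‖M‖ * ‖M‖ = (star v ⬝ᵥ v).re := by
    rw [← l2_opNorm_conjTranspose_mul_self, conjTranspose_vecMulVec_single_mul_self,
      l2_opNorm_diagonal, Pi.norm_single]
    conv_lhs => rw [← ofReal_re_dotProduct_star_self v]
    exact RCLike.norm_of_nonneg (RCLike.nonneg_iff.mp (dotProduct_star_self_nonneg v)).1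
  rw [opNormMat, ← cstar_norm_def, ← hM, Real.sqrt_mul_self (norm_nonneg M)]

end

/-- For every `m ≥ 1` and `0 < p < ∞` there is a complex-linear map `Φ` from `m×m`
matrices to `m²×m²` matrices with `Tr((Φ(A)*Φ(A))^{p/2}) = (Tr(A*A))^{p/2}` for all `A`,
and such that the operator norm of `Φ(A)` is `(Tr(A*A))^{1/2}`.  In other words, `S_2^m`
embeds isometrically into `S_p^{m²}` for every `p ∈ (0,∞]`. -/
theorem S2_embeds_into_Sp_m_squared (m : ℕ) (hm : 1 ≤ m) (p : ℝ) (hp : 0 < p) :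
    ∃ Φ : Matrix (Fin m) (Fin m) ℂ →ₗ[ℂ] Matrix (Fin (m ^ 2)) (Fin (m ^ 2)) ℂ,
      ∀ A : Matrix (Fin m) (Fin m) ℂ,
        schattenSum p (Φ A) = ((Aᴴ * A).trace.re) ^ (p / 2) ∧
        opNormMat (Φ A) = ((Aᴴ * A).trace.re) ^ ((1 : ℝ) / 2) := by
  let e : Fin m × Fin m ≃ Fin (m ^ 2) := finProdFinEquiv.trans (finCongr (sq m).symm)
  refine ⟨vecToColumn ℂ e ⟨0, pow_pos hm 2⟩, fun A => ?_⟩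
  rw [vecToColumn_apply, schattenSum_vecMulVec_single hp.ne', opNormMat_vecMulVec_single,
    star_vec_comp_dotProduct_vec_comp, Real.sqrt_eq_rpow]
  exact ⟨rfl, rfl⟩
end

section
/- Let m ≥ 1 be an integer and let p ≥ 2 be an even integer. Then there exist an integer n with m ≤ n ≤ C(m+p−1, m−1) (a binomial coefficient) and a linear map T : ℝ^m → ℝ^n such that Σ_{j=1}^n |(Tx)_j|^p = (Σ_{i=1}^m x_i²)^{p/2} for all x ∈ ℝ^m; that is, ℓ_2^m(ℝ) embeds isometrically into ℓ_p^n(ℝ). -/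
/-!
For even `p`, the average `z` over the unit ball `B ⊆ ℝ^m` of the moment vector `(u^k)_{|k| = p}`
lies in the convex hull of the moment vectors. Pairing `z` with the multinomial expansion of
`⟪·, x⟫^p` gives the average of `⟪u, x⟫^p` over `B`, which by rotation invariance and homogeneity
is `c ‖x‖^p` with `c > 0`. A conic Carathéodory argument in the space of moment vectors, whose
dimension is the number `C(m+p-1, m-1)` of degree-`p` monomials, writes `z` as a nonnegative
combination of at most that many moment vectors, i.e. `‖x‖^p = Σ_j w_j ⟪u_j, x⟫^p`. Then
`x ↦ (w_j^{1/p} ⟪u_j, x⟫)_j` is the embedding.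
-/

open Finset MeasureTheory Metric
open scoped RealInnerProductSpace

section ConicCaratheodory

variable {𝕜 ι V : Type*} [Field 𝕜] [LinearOrder 𝕜] [IsStrictOrderedRing 𝕜]
  [AddCommGroup V] [Module 𝕜 V]

theorem exists_erase_nonneg_sum_eq_of_not_linearIndepOn [DecidableEq ι] {v : ι → V}
    {t : Finset ι} {w : ι → 𝕜} (hw : ∀ i ∈ t, 0 ≤ w i) (ht : ¬LinearIndepOn 𝕜 v t) :
    ∃ j ∈ t, ∃ w' : ι → 𝕜, (∀ i ∈ t.erase j, 0 ≤ w' i) ∧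
      ∑ i ∈ t.erase j, w' i • v i = ∑ i ∈ t, w i • v i := by
  obtain ⟨g, hg, i₀, hi₀, hgi₀⟩ : ∃ g : ι → 𝕜, ∑ i ∈ t, g i • v i = 0 ∧ ∃ i ∈ t, 0 < g i := by
    obtain ⟨g, hg, i, hi, hgi⟩ := not_linearIndepOn_finset_iff.mp ht
    rcases hgi.lt_or_gt with hneg | hpos
    · exact ⟨-g, by simp [hg], i, hi, by simpa using hneg⟩
    · exact ⟨g, hg, i, hi, hpos⟩
  -- move along `-g` until the first weight vanishes
  obtain ⟨j, hj, hmin⟩ := (t.filter (0 < g ·)).exists_min_image (fun i => w i / g i)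
    ⟨i₀, mem_filter.mpr ⟨hi₀, hgi₀⟩⟩
  obtain ⟨hjt, hgj⟩ := mem_filter.mp hj
  set r := w j / g j
  have hr : 0 ≤ r := div_nonneg (hw j hjt) hgj.le
  refine ⟨j, hjt, fun i => w i - r * g i, fun i hi => ?_, ?_⟩
  · have hit := mem_of_mem_erase hi
    rcases le_or_gt (g i) 0 with hgi | hgi
    · nlinarith [hw i hit]
    · have := hmin i (mem_filter.mpr ⟨hit, hgi⟩)
      rw [div_le_div_iff₀ hgj hgi] at this
      simp only [r, sub_nonneg, div_mul_eq_mul_div, div_le_iff₀ hgj]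
      linarith
  · rw [sum_erase _ (by simp [r, hgj.ne']), ← sub_eq_zero]
    simp only [sub_smul, mul_smul, sum_sub_distrib, ← smul_sum, hg, smul_zero, sub_zero]
    simp

theorem exists_linearIndepOn_nonneg_sum_eq (v : ι → V) (t : Finset ι) (w : ι → 𝕜)
    (hw : ∀ i ∈ t, 0 ≤ w i) :
    ∃ s ⊆ t, LinearIndepOn 𝕜 v s ∧ ∃ w' : ι → 𝕜, (∀ i ∈ s, 0 ≤ w' i) ∧
      ∑ i ∈ s, w' i • v i = ∑ i ∈ t, w i • v i := by
  classical
  induction t using Finset.strongInduction generalizing w with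
  | H t ih =>
    by_cases ht : LinearIndepOn 𝕜 v t
    · exact ⟨t, subset_rfl, ht, w, hw, rfl⟩
    obtain ⟨j, hj, w', hw', hsum⟩ := exists_erase_nonneg_sum_eq_of_not_linearIndepOn hw ht
    obtain ⟨s, hs, hli, w'', hw'', hsum'⟩ := ih _ (erase_ssubset hj) w' hw'
    exact ⟨s, hs.trans (erase_subset j t), hli, w'', hw'', hsum'.trans hsum⟩

theorem exists_linearIndepOn_nonneg_sum_eq_of_mem_convexHull {s : Set V} {z : V}
    (hz : z ∈ convexHull 𝕜 s) :
    ∃ t : Finset V, ↑t ⊆ s ∧ LinearIndepOn 𝕜 id (t : Set V) ∧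
      ∃ w : V → 𝕜, (∀ v ∈ t, 0 ≤ w v) ∧ ∑ v ∈ t, w v • v = z := by
  rw [convexHull_eq_union_convexHull_finite_subsets, Set.mem_iUnion₂] at hz
  obtain ⟨t, hts, hz⟩ := hz
  obtain ⟨w, hw, -, rfl⟩ := Finset.mem_convexHull'.mp hz
  obtain ⟨t', ht', hli, w', hw', hsum⟩ := exists_linearIndepOn_nonneg_sum_eq id t w hw
  exact ⟨t', (coe_subset.mpr ht').trans hts, hli, w', hw', hsum⟩

end ConicCaratheodory

theorem IsCompact.convexHull {E : Type*} [NormedAddCommGroup E] [NormedSpace ℝ E]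
    [FiniteDimensional ℝ E] {s : Set E} (hs : IsCompact s) : IsCompact (convexHull ℝ s) := by
  let combination (k : ℕ) (q : (Fin k → ℝ) × (Fin k → E)) : E := ∑ i, q.1 i • q.2 i
  -- by Carathéodory, at most `finrank ℝ E + 1` points are needed
  have hhull : _root_.convexHull ℝ s = ⋃ k ∈ range (Module.finrank ℝ E + 2),
      combination k '' (stdSimplex ℝ (Fin k) ×ˢ Set.univ.pi fun _ => s) := by
    refine subset_antisymm (fun x hx => ?_) (Set.iUnion₂_subset fun k _ => ?_)
    · obtain ⟨ι, _, y, w, hys, hy, hw, hw₁, rfl⟩ := eq_pos_convex_span_of_mem_convexHull hx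
      let e := Fintype.equivFin ι
      refine Set.mem_iUnion₂.mpr ⟨Fintype.card ι, mem_range.mpr
        (Nat.lt_succ_of_le (hy.card_le_finrank_succ.trans
          (Nat.succ_le_succ (Submodule.finrank_le _)))), (w ∘ e.symm, y ∘ e.symm),
        ⟨⟨fun i => (hw _).le, ?_⟩, fun i _ => hys (Set.mem_range_self _)⟩, ?_⟩
      · simpa [e.symm.sum_comp w] using hw₁
      · exact e.symm.sum_comp (fun i => w i • y i)
    · rintro _ ⟨⟨w, y⟩, ⟨⟨hw, hw₁⟩, hy⟩, rfl⟩
      exact (convex_convexHull ℝ s).sum_mem (fun i _ => hw i) hw₁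
        fun i _ => subset_convexHull ℝ s (hy i (Set.mem_univ i))
  rw [hhull]
  refine (finite_toSet _).isCompact_biUnion fun k _ => ?_
  exact ((isCompact_stdSimplex ℝ _).prod (isCompact_univ_pi fun _ => hs)).image
    (by fun_prop)

theorem IsCompact.setAverage_mem_convexHull {X V : Type*} [TopologicalSpace X] [T2Space X]
    [MeasurableSpace X] [OpensMeasurableSpace X] [NormedAddCommGroup V] [NormedSpace ℝ V]
    [FiniteDimensional ℝ V] {μ : Measure X} [IsFiniteMeasureOnCompacts μ] {s : Set X}
    (hs : IsCompact s) (hμ : μ s ≠ 0) {F : X → V} (hF : Continuous F) :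
    ⨍ x in s, F x ∂μ ∈ _root_.convexHull ℝ (F '' s) :=
  (convex_convexHull ℝ _).set_average_mem (hs.image hF).convexHull.isClosed hμ
    hs.measure_lt_top.ne
    ((ae_restrict_iff' hs.measurableSet).mpr (.of_forall fun _ hx =>
      subset_convexHull ℝ _ (Set.mem_image_of_mem F hx)))
    (hF.continuousOn.integrableOn_compact hs)

section RotationInvariance

variable {E : Type*} [NormedAddCommGroup E] [InnerProductSpace ℝ E]

theorem eq_norm_pow_mul_of_forall_linearIsometryEquiv {f : E → ℝ} {p : ℕ}
    (hf : ∀ (L : E ≃ₗᵢ[ℝ] E) (x : E), f (L x) = f x)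
    (hhom : ∀ (r : ℝ) (x : E), f (r • x) = r ^ p * f x) {e : E} (he : ‖e‖ = 1) (x : E) :
    f x = ‖x‖ ^ p * f e := by
  have hnorm : ‖x‖ = ‖‖x‖ • e‖ := by rw [norm_smul, he, mul_one, norm_norm]
  calc f x = f (Submodule.reflection (ℝ ∙ (x - ‖x‖ • e))ᗮ x) := (hf _ x).symm
    _ = ‖x‖ ^ p * f e := by rw [Submodule.reflection_sub hnorm, hhom]

variable [FiniteDimensional ℝ E] [MeasurableSpace E] [BorelSpace E]

theorem setIntegral_closedBall_inner_pow_map (p : ℕ) (L : E ≃ₗᵢ[ℝ] E) (x : E) :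
    ∫ u in closedBall (0 : E) 1, ⟪u, L x⟫ ^ p = ∫ u in closedBall (0 : E) 1, ⟪u, x⟫ ^ p := by
  have hball : L ⁻¹' closedBall 0 1 = closedBall 0 1 := by simp
  rw [← (L.measurePreserving).setIntegral_preimage_emb L.toHomeomorph.measurableEmbedding,
    hball]
  simp_rw [LinearIsometryEquiv.inner_map_map]

theorem setIntegral_closedBall_inner_pow_pos {p : ℕ} (hp : Even p) {e : E} (he : ‖e‖ = 1) :
    0 < ∫ u in closedBall (0 : E) 1, ⟪u, e⟫ ^ p := by
  have hcont : Continuous fun u : E => ⟪u, e⟫ ^ p := by fun_prop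
  rw [setIntegral_pos_iff_support_of_nonneg_ae
    (Filter.Eventually.of_forall fun u => hp.pow_nonneg _)
    (hcont.continuousOn.integrableOn_compact (isCompact_closedBall 0 1))]
  -- the ball `B(e/2, 1/2)` lies in the unit ball, and `⟪u, e⟫ > 0` on it
  have hsub : ball ((2 : ℝ)⁻¹ • e) 2⁻¹ ⊆ Function.support (fun u : E => ⟪u, e⟫ ^ p) ∩
      closedBall 0 1 := by
    intro u hu
    refine ⟨pow_ne_zero _ (ne_of_gt ?_), ball_subset_closedBall
      (ball_subset_ball' (by simp [norm_smul, he]; norm_num) hu)⟩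
    have h1 := abs_real_inner_le_norm (u - (2 : ℝ)⁻¹ • e) e
    have h2 : ⟪u, e⟫ = ⟪u - (2 : ℝ)⁻¹ • e, e⟫ + 2⁻¹ := by
      rw [inner_sub_left, real_inner_smul_left, real_inner_self_eq_norm_sq, he]
      ring
    rw [mem_ball, dist_eq_norm] at hu
    rw [he, mul_one] at h1
    linarith [neg_abs_le ⟪u - (2 : ℝ)⁻¹ • e, e⟫]
  exact (measure_ball_pos volume _ (by norm_num)).trans_le (measure_mono hsub)

theorem exists_setIntegral_closedBall_inner_pow_eq [Nontrivial E] {p : ℕ} (hp : Even p) :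
    ∃ c > 0, ∀ x : E, ∫ u in closedBall (0 : E) 1, ⟪u, x⟫ ^ p = c * ‖x‖ ^ p := by
  obtain ⟨e, he⟩ := exists_norm_eq E zero_le_one
  refine ⟨_, setIntegral_closedBall_inner_pow_pos hp he, fun x => ?_⟩
  rw [mul_comm]
  refine eq_norm_pow_mul_of_forall_linearIsometryEquiv
    (f := fun x => ∫ u in closedBall (0 : E) 1, ⟪u, x⟫ ^ p)
    (setIntegral_closedBall_inner_pow_map p) (fun r x => ?_) he x
  simp_rw [real_inner_smul_right, mul_pow, integral_const_mul]

end RotationInvariance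

section Moments

variable {m : ℕ} (p : ℕ)

/-- The values at `u` of the degree-`p` monomials in `m` variables, a monomial being indexed by
the multiset of its variables. -/
def momentVector (u : EuclideanSpace ℝ (Fin m)) : Sym (Fin m) p → ℝ :=
  fun k => (k.1.map u).prod

noncomputable def powerPairing (x : EuclideanSpace ℝ (Fin m)) : (Sym (Fin m) p → ℝ) →L[ℝ] ℝ :=
  ∑ k, ((k.1.countPerms : ℝ) * (k.1.map x).prod) • ContinuousLinearMap.proj k

variable {p}

theorem powerPairing_momentVector (x u : EuclideanSpace ℝ (Fin m)) :
    powerPairing p x (momentVector p u) = ⟪u, x⟫ ^ p := by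
  have : ⟪u, x⟫ = ∑ i, u i * x i := by simp [PiLp.inner_apply, mul_comm]
  rw [this, Finset.sum_pow, sym_univ]
  simp only [powerPairing, momentVector, FunLike.coe_sum, Finset.sum_apply,
    FunLike.coe_smul, Pi.smul_apply, ContinuousLinearMap.proj_apply, smul_eq_mul,
    Multiset.prod_map_mul]
  exact sum_congr rfl fun k _ => by ring

theorem continuous_momentVector : Continuous (momentVector (m := m) p) := by
  unfold momentVector
  fun_prop

theorem exists_powerPairing_setAverage_momentVector_eq (hm : 1 ≤ m) (hp : Even p) :
    ∃ κ > 0, ∀ x : EuclideanSpace ℝ (Fin m),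
      powerPairing p x (⨍ u in closedBall 0 1, momentVector p u) = κ * ‖x‖ ^ p := by
  have : Nonempty (Fin m) := ⟨⟨0, hm⟩⟩
  obtain ⟨c, hc, hint⟩ := exists_setIntegral_closedBall_inner_pow_eq
    (E := EuclideanSpace ℝ (Fin m)) hp
  have hB : volume (closedBall (0 : EuclideanSpace ℝ (Fin m)) 1) ≠ 0 :=
    (measure_closedBall_pos volume 0 one_pos).ne'
  refine ⟨(volume.real (closedBall (0 : EuclideanSpace ℝ (Fin m)) 1))⁻¹ * c,
    mul_pos (inv_pos.mpr (ENNReal.toReal_pos hB measure_closedBall_lt_top.ne)) hc, fun x => ?_⟩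
  rw [setAverage_eq, map_smul, ← (powerPairing p x).integral_comp_comm
    (continuous_momentVector.continuousOn.integrableOn_compact (isCompact_closedBall 0 1))]
  simp only [powerPairing_momentVector, smul_eq_mul]
  rw [hint, mul_assoc]

theorem exists_sum_inner_pow_eq_norm_pow (hm : 1 ≤ m) (hp : Even p) (hp0 : p ≠ 0) :
    ∃ n ≤ Fintype.card (Sym (Fin m) p), ∃ u : Fin n → EuclideanSpace ℝ (Fin m),
      ∀ x, ∑ j, ⟪u j, x⟫ ^ p = ‖x‖ ^ p := by
  set B := closedBall (0 : EuclideanSpace ℝ (Fin m)) 1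
  obtain ⟨κ, hκ, hpair⟩ := exists_powerPairing_setAverage_momentVector_eq hm hp
  obtain ⟨t, htB, hli, w, hw, hz⟩ := exists_linearIndepOn_nonneg_sum_eq_of_mem_convexHull
    ((isCompact_closedBall (0 : EuclideanSpace ℝ (Fin m)) 1).setAverage_mem_convexHull
      (measure_closedBall_pos volume 0 one_pos).ne' (continuous_momentVector (p := p)))
  have hcard : t.card ≤ Fintype.card (Sym (Fin m) p) := by
    simpa using hli.finset_card_le_finrank
  set pt := Function.invFunOn (momentVector p) B
  have hpt : ∀ v ∈ t, momentVector p (pt v) = v := fun v hv => Function.invFunOn_eq (htB hv)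
  have hscale : ∀ v ∈ t, ∀ x,
      ⟪(w v / κ) ^ (p : ℝ)⁻¹ • pt v, x⟫ ^ p = κ⁻¹ * (w v * ⟪pt v, x⟫ ^ p) := by
    intro v hv x
    rw [real_inner_smul_left, mul_pow,
      Real.rpow_inv_natCast_pow (div_nonneg (hw v hv) hκ.le) hp0, div_eq_inv_mul, mul_assoc]
  let e := t.equivFin.symm
  refine ⟨t.card, hcard, fun j => (w (e j) / κ) ^ (p : ℝ)⁻¹ • pt (e j), fun x => ?_⟩
  calc ∑ j, ⟪(w (e j) / κ) ^ (p : ℝ)⁻¹ • pt (e j), x⟫ ^ p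
      = κ⁻¹ * ∑ v ∈ t, w v * ⟪pt v, x⟫ ^ p := by
        rw [mul_sum, ← sum_coe_sort t, ← e.sum_comp]
        exact sum_congr rfl fun j _ => hscale _ (e j).2 x
    _ = κ⁻¹ * powerPairing p x (∑ v ∈ t, w v • v) := by
        simp only [map_sum, map_smul, smul_eq_mul]
        congr 1
        exact sum_congr rfl fun v hv => by rw [← powerPairing_momentVector, hpt v hv]
    _ = ‖x‖ ^ p := by rw [hz, hpair, inv_mul_cancel_left₀ hκ.ne']

end Moments

theorem EuclideanSpace.norm_pow_of_even {ι : Type*} [Fintype ι] {p : ℕ} (hp : Even p)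
    (x : EuclideanSpace ℝ ι) : ‖x‖ ^ p = (∑ i, x i ^ 2) ^ (p / 2) := by
  rw [← EuclideanSpace.real_norm_sq_eq, ← pow_mul, Nat.mul_div_cancel' hp.two_dvd]

/-- For every `m ≥ 1` and every even integer `p ≥ 2`, there are `n` with
`m ≤ n ≤ C(m+p-1, m-1)` and a linear isometric embedding of `ℓ_2^m(ℝ)` into
`ℓ_p^n(ℝ)`, i.e. a linear `T : ℝ^m → ℝ^n` with
`Σ_j |(Tx)_j|^p = (Σ_i x_i²)^{p/2}` for all `x`. -/
theorem l2m_embeds_into_lpn_real (m : ℕ) (hm : 1 ≤ m) (p : ℕ) (hp2 : 2 ≤ p)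
    (hpe : Even p) :
    ∃ n : ℕ, m ≤ n ∧ n ≤ Nat.choose (m + p - 1) (m - 1) ∧
      ∃ T : (Fin m → ℝ) →ₗ[ℝ] (Fin n → ℝ),
        ∀ x : Fin m → ℝ, ∑ j, |T x j| ^ p = (∑ i, x i ^ 2) ^ (p / 2) := by
  have hp0 : p ≠ 0 := by omega
  obtain ⟨n, hn, u, hu⟩ := exists_sum_inner_pow_eq_norm_pow hm hpe hp0
  let T : (Fin m → ℝ) →ₗ[ℝ] (Fin n → ℝ) := LinearMap.pi (fun j => innerₛₗ ℝ (u j)) ∘ₗ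
    (WithLp.linearEquiv 2 ℝ (Fin m → ℝ)).symm.toLinearMap
  have hT : ∀ x, ∑ j, T x j ^ p = ‖WithLp.toLp 2 x‖ ^ p := fun x => hu (WithLp.toLp 2 x)
  have hinj : Function.Injective T := by
    refine (injective_iff_map_eq_zero T).mpr fun x hx => ?_
    have h := hT x
    rw [hx] at h
    simpa [zero_pow hp0, eq_comm (a := (0 : ℝ)), hp0] using h
  have hcard : Fintype.card (Sym (Fin m) p) = (m + p - 1).choose (m - 1) := by
    rw [Sym.card_sym_eq_choose, Fintype.card_fin, Nat.choose_symm_of_eq_add]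
    omega
  refine ⟨n, ?_, hcard ▸ hn, T, fun x => ?_⟩
  · simpa using LinearMap.finrank_le_finrank_of_injective hinj
  · simpa [hpe.pow_abs, EuclideanSpace.norm_pow_of_even hpe] using hT x
end

section
/- Let m, n be integers with 2 ≤ m ≤ n, and let q, p ∈ [1,∞] with q ≠ p, such that it is not the case that q = 2 and p is an even positive integer, and it is not the case that both q ∈ {1,∞} and p ∈ {1,∞}. Then there is no linear map T : ℝ^m → ℝ^n with ‖Tx‖_p = ‖x‖_q for all x ∈ ℝ^m; that is, ℓ_q^m(ℝ) does not embed isometrically into ℓ_p^n(ℝ). -/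
open scoped ENNReal

/-- The `ℓ_p` norm on `ℝⁿ` for `p ∈ (0,∞]`: `(Σ_i |x_i|^p)^{1/p}` for finite `p` and
`max_i |x_i|` for `p = ∞`. -/
noncomputable def lpNormR (p : ℝ≥0∞) {n : ℕ} (x : Fin n → ℝ) : ℝ :=
  if p = ∞ then ⨆ i, |x i|
  else (∑ i, |x i| ^ p.toReal) ^ (1 / p.toReal)

/-!
An isometry restricted to `span {e₀, e₁}` yields `u, v ∈ ℝⁿ` with `‖u + t v‖_p = ‖(1, t)‖_q`
for all real `t`.

If `p = ∞`, one coordinate `i` attains the maximum for arbitrarily small `t > 0`, so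
`(u_i + t v_i)² = (1 + t^q)^{2/q}` along such `t`; comparing the terms of order `1` and `t`
gives `u_i² = 1` and `v_i = 0`, after which `1 = (1 + t^q)^{2/q}`, which is false.
If `q = ∞`, then `‖u + t v‖_p = 1` for `|t| ≤ 1`, and strict convexity of `|·|^p` forces `v = 0`,
although `‖v‖_p = 1`.

If both are finite, `∑ |u_i + t v_i|^p = (1 + |t|^q)^{p/q}`. Once `u` and `v` have disjoint
supports, `t = 1` gives `2 = 2^{p/q}`. If `p` is not an even integer and `u_i + t₀ v_i = 0` with
`u_i v_i ≠ 0`, then near `t₀ ≠ 0` everything is analytic except the term `c |t - t₀|^p`, while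
`|s|^p = sⁿ g(s)` with `g(0) ≠ 0` would force `p = n` even; so the supports are disjoint. If `p = 2k`, the left side is a
polynomial in `t`: for `q < 2` this makes `|t|^q` analytic, and for `q > 2` its `t²`-coefficient
`binom(2k, 2) ∑ u_i^{2k-2} v_i²` must vanish, which again makes the supports disjoint.
-/

open Real Filter Set Topology

theorem analyticAt_rpow_const {x : ℝ} (hx : 0 < x) (c : ℝ) :
    AnalyticAt ℝ (fun y : ℝ => y ^ c) x := by
  have hC : AnalyticAt ℂ (fun z : ℂ => z ^ (c : ℂ)) x :=
    analyticAt_id.cpow analyticAt_const (Complex.ofReal_mem_slitPlane.2 hx)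
  have hre : AnalyticAt ℝ (fun y : ℝ => ((y : ℂ) ^ (c : ℂ)).re) x :=
    (Complex.reCLM.analyticAt _).comp (hC.restrictScalars.comp (Complex.ofRealCLM.analyticAt x))
  refine hre.congr ?_
  filter_upwards [eventually_gt_nhds hx] with y hy
  simp [← Complex.ofReal_cpow hy.le]

theorem AnalyticAt.rpow_const {f : ℝ → ℝ} {x : ℝ} (hf : AnalyticAt ℝ f x) (hfx : 0 < f x)
    (c : ℝ) : AnalyticAt ℝ (fun y => f y ^ c) x :=
  (analyticAt_rpow_const hfx c).comp hf

theorem AnalyticAt.abs_rpow {f : ℝ → ℝ} {x : ℝ} (hf : AnalyticAt ℝ f x) (hfx : f x ≠ 0)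
    (c : ℝ) : AnalyticAt ℝ (fun y => |f y| ^ c) x := by
  rcases hfx.lt_or_gt with hneg | hpos
  · refine (hf.neg.rpow_const (neg_pos.2 hneg) c).congr ?_
    filter_upwards [hf.continuousAt.eventually (eventually_lt_nhds hneg)] with y hy
    simp [abs_of_neg hy]
  · refine (hf.rpow_const hpos c).congr ?_
    filter_upwards [hf.continuousAt.eventually (eventually_gt_nhds hpos)] with y hy
    simp [abs_of_pos hy]

theorem even_of_abs_rpow_eventuallyEq {p : ℝ} {n : ℕ} {g : ℝ → ℝ} (hg : ContinuousAt g 0)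
    (hg0 : g 0 ≠ 0) (h : ∀ᶠ s in 𝓝 0, |s| ^ p = s ^ n * g s) : Even n := by
  have hneg : ∀ᶠ s in 𝓝 0, |-s| ^ p = (-s) ^ n * g (-s) :=
    (continuous_neg.tendsto' (0 : ℝ) 0 neg_zero).eventually h
  have hsymm : ∀ᶠ s in 𝓝[≠] 0, (-1) ^ n * g (-s) = g s := by
    filter_upwards [nhdsWithin_le_nhds h, nhdsWithin_le_nhds hneg, self_mem_nhdsWithin]
      with s h₁ h₂ (hs : s ≠ 0)
    rw [abs_neg, h₁, neg_pow] at h₂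
    apply mul_left_cancel₀ (pow_ne_zero n hs)
    linear_combination -h₂
  have hlim : Tendsto (fun s => (-1) ^ n * g (-s)) (𝓝[≠] 0) (𝓝 ((-1) ^ n * g 0)) := by
    refine (Tendsto.const_mul _ ?_).mono_left nhdsWithin_le_nhds
    exact hg.tendsto.comp (continuous_neg.tendsto' (0 : ℝ) 0 neg_zero)
  have := tendsto_nhds_unique (hlim.congr' hsymm) (hg.tendsto.mono_left nhdsWithin_le_nhds)
  rw [← neg_one_pow_eq_one_iff_even (by norm_num : (-1 : ℝ) ≠ 1)]
  exact mul_right_cancel₀ hg0 (this.trans (one_mul _).symm)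

theorem eq_of_abs_rpow_eventuallyEq {p : ℝ} {n : ℕ} {g : ℝ → ℝ} (hg : ContinuousAt g 0)
    (hg0 : g 0 ≠ 0) (h : ∀ᶠ s in 𝓝 0, |s| ^ p = s ^ n * g s) : p = n := by
  have hhalf : Tendsto (fun s : ℝ => s / 2) (𝓝 0) (𝓝 0) := by
    simpa using (continuous_id.div_const (2 : ℝ)).tendsto 0
  have hscale : ∀ᶠ s in 𝓝[>] 0, (2 : ℝ) ^ p * g (s / 2) = 2 ^ n * g s := by
    filter_upwards [nhdsWithin_le_nhds h, nhdsWithin_le_nhds (hhalf.eventually h),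
      self_mem_nhdsWithin] with s h₁ h₂ (hs : 0 < s)
    rw [abs_of_pos hs] at h₁
    rw [abs_of_pos (half_pos hs), div_rpow hs.le zero_le_two, div_pow, h₁] at h₂
    have := pow_ne_zero n hs.ne'
    field_simp at h₂
    linear_combination -h₂
  have hlim : Tendsto (fun s => (2 : ℝ) ^ p * g (s / 2)) (𝓝[>] 0) (𝓝 (2 ^ p * g 0)) :=
    ((hg.tendsto.comp hhalf).const_mul _).mono_left nhdsWithin_le_nhds
  have hlim' : Tendsto (fun s => (2 : ℝ) ^ n * g s) (𝓝[>] 0) (𝓝 (2 ^ n * g 0)) :=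
    (hg.tendsto.const_mul _).mono_left nhdsWithin_le_nhds
  have h2 : (2 : ℝ) ^ p = 2 ^ (n : ℝ) := by
    rw [rpow_natCast]
    exact mul_right_cancel₀ hg0 (tendsto_nhds_unique (hlim.congr' hscale) hlim')
  exact (rpow_right_inj zero_lt_two (by norm_num)).1 h2

theorem not_analyticAt_abs_rpow {p : ℝ} (hp : 0 < p) (hpe : ∀ k : ℕ, p ≠ 2 * k) :
    ¬ AnalyticAt ℝ (fun s : ℝ => |s| ^ p) 0 := by
  intro h
  have hnz : ¬ ∀ᶠ s in 𝓝 (0 : ℝ), |s| ^ p = 0 := fun hev => by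
    obtain ⟨s, hs, hs0⟩ :=
      ((hev.filter_mono nhdsWithin_le_nhds).and (self_mem_nhdsWithin (s := {0}ᶜ))).exists
    exact hs0 (by simpa [hp.ne'] using hs)
  obtain ⟨n, g, hg, hg0, hfg⟩ := h.exists_eventuallyEq_pow_smul_nonzero_iff.2 hnz
  have hfg' : ∀ᶠ s in 𝓝 0, |s| ^ p = s ^ n * g s := by simpa using hfg
  obtain ⟨k, hk⟩ := even_of_abs_rpow_eventuallyEq hg.continuousAt hg0 hfg'
  exact hpe k (by rw [eq_of_abs_rpow_eventuallyEq hg.continuousAt hg0 hfg', hk]; push_cast; ring)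

theorem two_mul_pow_add_le_add_pow_add_sub_pow {n : ℕ} (hn : Even n) (a x : ℝ) :
    2 * a ^ n + 2 * n.choose 2 * a ^ (n - 2) * x ^ 2 ≤ (a + x) ^ n + (a - x) ^ n := by
  obtain rfl | hn2 : n = 0 ∨ 2 ≤ n := by rcases hn with ⟨k, rfl⟩; omega
  · norm_num
  set F : ℕ → ℝ := fun j => (x ^ j + (-x) ^ j) * a ^ (n - j) * n.choose j
  have hF : ∀ j ∈ Finset.range (n + 1), j ∉ ({0, 2} : Finset ℕ) → 0 ≤ F j := by
    intro j _ _
    rcases Nat.even_or_odd j with hj | hj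
    · have hnj : Even (n - j) := by
        obtain ⟨a, rfl⟩ := hn; obtain ⟨b, rfl⟩ := hj; exact ⟨a - b, by omega⟩
      simp only [F, hj.neg_pow]
      exact mul_nonneg (mul_nonneg (by linarith [hj.pow_nonneg x]) (hnj.pow_nonneg a))
        (Nat.cast_nonneg _)
    · simp [F, hj.neg_pow]
  have hsub : ({0, 2} : Finset ℕ) ⊆ Finset.range (n + 1) := by
    intro j hj; simp only [Finset.mem_insert, Finset.mem_singleton] at hj
    rw [Finset.mem_range]; omega
  calc 2 * a ^ n + 2 * n.choose 2 * a ^ (n - 2) * x ^ 2 = ∑ j ∈ {0, 2}, F j := by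
        simp [F]; ring
    _ ≤ ∑ j ∈ Finset.range (n + 1), F j := Finset.sum_le_sum_of_subset_of_nonneg hsub hF
    _ = (a + x) ^ n + (a - x) ^ n := by
        rw [add_comm a, sub_eq_neg_add, add_pow, add_pow, ← Finset.sum_add_distrib]
        exact Finset.sum_congr rfl fun j _ => by ring

theorem two_mul_abs_rpow_lt {p : ℝ} (hp : 1 < p) (x : ℝ) {y : ℝ} (hy : y ≠ 0) :
    2 * |x| ^ p < |x + y| ^ p + |x - y| ^ p := by
  rcases eq_or_ne |x + y| |x - y| with heq | hne
  · obtain rfl : x = 0 := by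
      rcases abs_eq_abs.1 heq with h | h
      · exact absurd (by linarith : y = 0) hy
      · linarith
    have : 0 < |y| ^ p := rpow_pos_of_pos (abs_pos.2 hy) p
    simp [zero_rpow (by linarith : p ≠ 0)]
    linarith
  · have hmid : |x| ≤ 2⁻¹ * |x + y| + 2⁻¹ * |x - y| := by
      have := abs_add_le (x + y) (x - y)
      rw [show x + y + (x - y) = 2 * x by ring, abs_mul, abs_two] at this
      linarith
    have hconv := (strictConvexOn_rpow hp).2 (abs_nonneg (x + y)) (abs_nonneg (x - y)) hne
      (by norm_num : (0 : ℝ) < 2⁻¹) (by norm_num : (0 : ℝ) < 2⁻¹) (by norm_num)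
    simp only [smul_eq_mul] at hconv
    have := rpow_le_rpow (abs_nonneg x) hmid (by linarith : 0 ≤ p)
    linarith

theorem two_mul_abs_rpow_le {p : ℝ} (hp : 1 < p) (x y : ℝ) :
    2 * |x| ^ p ≤ |x + y| ^ p + |x - y| ^ p := by
  rcases eq_or_ne y 0 with rfl | hy
  · simp; linarith
  · exact (two_mul_abs_rpow_lt hp x hy).le

theorem tendsto_one_add_rpow_rpow_sub_one_div_pow {q : ℝ} {k : ℕ} (hkq : (k : ℝ) < q)
    (r : ℝ) : Tendsto (fun t : ℝ => ((1 + t ^ q) ^ r - 1) / t ^ k) (𝓝[>] 0) (𝓝 0) := by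
  have hq : 0 < q := lt_of_le_of_lt k.cast_nonneg hkq
  have hderiv : HasDerivAt (fun s : ℝ => (1 + s) ^ r) r 0 := by
    simpa using ((hasDerivAt_id (0 : ℝ)).const_add 1).rpow_const (p := r) (by norm_num)
  have hpow : ∀ {c : ℝ}, 0 < c → Tendsto (fun t : ℝ => t ^ c) (𝓝[>] 0) (𝓝 0) := fun hc => by
    simpa [zero_rpow hc.ne'] using
      ((continuousAt_rpow_const 0 _ (Or.inr hc.le)).tendsto).mono_left nhdsWithin_le_nhds
  have hpow' : Tendsto (fun t : ℝ => t ^ q) (𝓝[>] 0) (𝓝[≠] 0) :=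
    tendsto_nhdsWithin_of_tendsto_nhds_of_eventually_within _ (hpow hq)
      (eventually_nhdsWithin_of_forall fun t (ht : 0 < t) => (rpow_pos_of_pos ht q).ne')
  have hlim := ((hasDerivAt_iff_tendsto_slope.1 hderiv).comp hpow').mul (hpow (sub_pos.2 hkq))
  rw [mul_zero] at hlim
  refine hlim.congr' ?_
  filter_upwards [self_mem_nhdsWithin] with t (ht : 0 < t)
  have hsplit : t ^ q = t ^ k * t ^ (q - k) := by rw [← rpow_natCast, ← rpow_add ht]; ring_nf
  have : t ^ (q - k) ≠ 0 := (rpow_pos_of_pos ht _).ne'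
  simp only [Function.comp, slope_def_field, add_zero, sub_zero, one_rpow]
  rw [hsplit]
  field_simp

section LqLine

variable {ι : Type*} [Fintype ι] {p q : ℝ} {u v : ι → ℝ}

/-- The identity `‖u + t v‖_p = ‖(1, t)‖_q`, raised to the power `p`. -/
def IsLqLine (p q : ℝ) (u v : ι → ℝ) : Prop :=
  ∀ t : ℝ, ∑ i, |u i + t * v i| ^ p = (1 + |t| ^ q) ^ (p / q)

namespace IsLqLine

theorem eq_of_disjoint_support (h : IsLqLine p q u v) (hp : p ≠ 0) (hq : q ≠ 0)
    (hv : ∑ i, |v i| ^ p = 1) (hdisj : ∀ i, u i = 0 ∨ v i = 0) : p = q := by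
  have hu : ∑ i, |u i| ^ p = 1 := by simpa [zero_rpow hq] using h 0
  have hsplit : ∀ i, |u i + 1 * v i| ^ p = |u i| ^ p + |v i| ^ p := fun i => by
    rcases hdisj i with h0 | h0 <;> simp [h0, zero_rpow hp]
  have h2 := h 1
  rw [Finset.sum_congr rfl fun i _ => hsplit i, Finset.sum_add_distrib, hu, hv] at h2
  norm_num at h2
  have h2' : (2 : ℝ) ^ (p / q) = 2 ^ (1 : ℝ) := by rw [rpow_one, ← h2]
  exact (div_eq_one_iff_eq hq).1 ((rpow_right_inj zero_lt_two (by norm_num)).1 h2')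

theorem disjoint_support_of_not_even (h : IsLqLine p q u v) (hp : 0 < p)
    (hpe : ∀ k : ℕ, p ≠ 2 * k) : ∀ i, u i = 0 ∨ v i = 0 := by
  classical
  by_contra! ⟨i, hui, hvi⟩
  set t₀ := -u i / v i
  have ht₀ : t₀ ≠ 0 := div_ne_zero (neg_ne_zero.2 hui) hvi
  set Z := Finset.univ.filter fun j => u j + t₀ * v j = 0
  set c := ∑ j ∈ Z, |v j| ^ p
  have hc : 0 < c := by
    have hiZ : i ∈ Z := Finset.mem_filter.2 ⟨Finset.mem_univ _, by
      simp only [t₀, div_mul_cancel₀ _ hvi, add_neg_cancel]⟩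
    exact lt_of_lt_of_le (rpow_pos_of_pos (abs_pos.2 hvi) p)
      (Finset.single_le_sum (fun j _ => rpow_nonneg (abs_nonneg _) _) hiZ)
  have hZ : ∀ t, ∑ j ∈ Z, |u j + t * v j| ^ p = c * |t - t₀| ^ p := fun t => by
    rw [Finset.sum_mul]
    refine Finset.sum_congr rfl fun j hj => ?_
    rw [show u j + t * v j = (t - t₀) * v j by linear_combination (Finset.mem_filter.1 hj).2,
      abs_mul, mul_rpow (abs_nonneg _) (abs_nonneg _), mul_comm]
  -- `c * |t - t₀| ^ p` is the difference of the two analytic functions below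
  have hrest : AnalyticAt ℝ (fun t => ∑ j ∈ Zᶜ, |u j + t * v j| ^ p) t₀ :=
    Finset.analyticAt_fun_sum _ fun j hj =>
      (analyticAt_const.add (analyticAt_id.mul analyticAt_const)).abs_rpow
        (by simpa [Z] using hj) p
  have hrhs : AnalyticAt ℝ (fun t : ℝ => (1 + |t| ^ q) ^ (p / q)) t₀ :=
    (analyticAt_const.add (analyticAt_id.abs_rpow ht₀ q)).rpow_const
      (by positivity : (0 : ℝ) < 1 + |t₀| ^ q) (p / q)
  have hshift : AnalyticAt ℝ (fun t => |t - t₀| ^ p) t₀ := by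
    refine ((hrhs.sub hrest).div_const (c := c)).congr (Eventually.of_forall fun t => ?_)
    show ((1 + |t| ^ q) ^ (p / q) - ∑ j ∈ Zᶜ, |u j + t * v j| ^ p) / c = |t - t₀| ^ p
    rw [← h t, ← Finset.sum_add_sum_compl Z, hZ]
    field_simp
    ring
  refine not_analyticAt_abs_rpow hp hpe ?_
  simpa [Function.comp_def] using
    hshift.comp_of_eq (f := fun s => s + t₀) (analyticAt_id.add analyticAt_const) (zero_add t₀)

theorem sum_add_mul_pow_eq (h : IsLqLine p q u v) {k : ℕ} (hpk : p = 2 * k) (t : ℝ) :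
    ∑ i, (u i + t * v i) ^ (2 * k) = (1 + |t| ^ q) ^ (p / q) := by
  rw [← h t]
  refine Finset.sum_congr rfl fun i _ => ?_
  rw [hpk, show (2 : ℝ) * k = (2 * k : ℕ) by push_cast; ring, rpow_natCast,
    (even_two_mul k).pow_abs]

theorem two_le_of_even (h : IsLqLine p q u v) {k : ℕ} (hk : 0 < k) (hpk : p = 2 * k)
    (hq : 0 < q) : 2 ≤ q := by
  by_contra! hq2
  have hp : 0 < p := by rw [hpk]; positivity
  set f : ℝ → ℝ := fun t => ∑ i, (u i + t * v i) ^ (2 * k)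
  have hf : ∀ t, f t = (1 + |t| ^ q) ^ (p / q) := h.sum_add_mul_pow_eq hpk
  have hf0 : f 0 = 1 := by simp [hf, zero_rpow hq.ne']
  have hfan : AnalyticAt ℝ f 0 :=
    Finset.analyticAt_fun_sum _ fun i _ =>
      (analyticAt_const.add (analyticAt_id.mul analyticAt_const)).pow _
  have habs : AnalyticAt ℝ (fun t : ℝ => |t| ^ q) 0 := by
    refine ((hfan.rpow_const (by rw [hf0]; exact one_pos) (q / p)).sub
      (analyticAt_const (v := 1))).congr (Eventually.of_forall fun t => ?_)
    show f t ^ (q / p) - 1 = |t| ^ q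
    rw [hf, ← rpow_mul (by positivity), div_mul_div_cancel₀' hp.ne', div_self hq.ne', rpow_one]
    ring
  refine not_analyticAt_abs_rpow hq (fun j hj => ?_) habs
  rcases Nat.eq_zero_or_pos j with rfl | hj0
  · simp [hj] at hq
  · have : (1 : ℝ) ≤ j := by exact_mod_cast hj0
    linarith

theorem disjoint_support_of_even_of_two_lt (h : IsLqLine p q u v) {k : ℕ} (hk : 0 < k)
    (hpk : p = 2 * k) (hq : 2 < q) : ∀ i, u i = 0 ∨ v i = 0 := by
  set B := (((2 * k).choose 2 : ℕ) : ℝ)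
  set S := ∑ i, u i ^ (2 * k - 2) * v i ^ 2
  have hB : 0 < B := Nat.cast_pos.2 (Nat.choose_pos (by omega))
  have hterm : ∀ i, 0 ≤ u i ^ (2 * k - 2) * v i ^ 2 := fun i =>
    mul_nonneg (Even.pow_nonneg ⟨k - 1, by omega⟩ _) (sq_nonneg _)
  have hu : ∑ i, u i ^ (2 * k) = 1 := by
    simpa [zero_rpow (by linarith : q ≠ 0)] using h.sum_add_mul_pow_eq hpk 0
  -- the binomial bound, summed over `i` at `t` and `-t`, shows that `B * S * t ^ 2 = o(t ^ 2)`
  have hbound : ∀ t : ℝ, 0 < t → B * S ≤ ((1 + t ^ q) ^ (p / q) - 1) / t ^ 2 := by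
    intro t ht
    have hsum := Finset.sum_le_sum fun i (_ : i ∈ Finset.univ) =>
      two_mul_pow_add_le_add_pow_add_sub_pow (even_two_mul k) (u i) (t * v i)
    have hminus := h.sum_add_mul_pow_eq hpk (-t)
    simp only [neg_mul, ← sub_eq_add_neg, abs_neg] at hminus
    rw [Finset.sum_add_distrib, Finset.sum_add_distrib, ← Finset.mul_sum, hu, hminus,
      h.sum_add_mul_pow_eq hpk, abs_of_pos ht] at hsum
    have hS : ∑ i, 2 * B * u i ^ (2 * k - 2) * (t * v i) ^ 2 = 2 * B * S * t ^ 2 := by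
      rw [Finset.mul_sum, Finset.sum_mul]
      exact Finset.sum_congr rfl fun i _ => by ring
    rw [le_div_iff₀ (by positivity)]
    linarith
  have hBS : B * S ≤ 0 :=
    ge_of_tendsto (tendsto_one_add_rpow_rpow_sub_one_div_pow (by norm_num; linarith) _)
      (eventually_nhdsWithin_of_forall hbound)
  have hS : S = 0 := le_antisymm (nonpos_of_mul_nonpos_right hBS hB)
    (Finset.sum_nonneg fun i _ => hterm i)
  intro i
  have := (Finset.sum_eq_zero_iff_of_nonneg fun i _ => hterm i).1 hS i (Finset.mem_univ i)
  rcases mul_eq_zero.1 this with h0 | h0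
  · rcases Nat.eq_zero_or_pos (2 * k - 2) with h2 | h2
    · simp [h2] at h0
    · exact Or.inl ((pow_eq_zero_iff h2.ne').1 h0)
  · exact Or.inr ((pow_eq_zero_iff two_ne_zero).1 h0)

theorem eq (h : IsLqLine p q u v) (hp : 0 < p) (hq : 0 < q) (hv : ∑ i, |v i| ^ p = 1)
    (hpq : ¬ (q = 2 ∧ ∃ k : ℕ, 0 < k ∧ p = 2 * k)) : p = q := by
  refine h.eq_of_disjoint_support hp.ne' hq.ne' hv ?_
  by_cases hpe : ∃ k : ℕ, 0 < k ∧ p = 2 * k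
  · obtain ⟨k, hk, hpk⟩ := hpe
    rcases (h.two_le_of_even hk hpk hq).lt_or_eq with hq2 | hq2
    · exact h.disjoint_support_of_even_of_two_lt hk hpk hq2
    · exact (hpq ⟨hq2.symm, k, hk, hpk⟩).elim
  · refine h.disjoint_support_of_not_even hp (fun k hk => hpe ⟨k, ?_, hk⟩)
    rcases Nat.eq_zero_or_pos k with rfl | hk0
    · simp [hk] at hp
    · exact hk0

end IsLqLine

theorem eq_zero_of_forall_sum_abs_add_mul_rpow_eq_one (hp : 1 < p)
    (h : ∀ t : ℝ, |t| ≤ 1 → ∑ i, |u i + t * v i| ^ p = 1) : v = 0 := by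
  by_contra hv
  obtain ⟨i, hi⟩ := Function.ne_iff.1 hv
  have hsum := Finset.sum_lt_sum (s := Finset.univ)
    (fun j _ => two_mul_abs_rpow_le hp (u j) (2⁻¹ * v j))
    ⟨i, Finset.mem_univ i, two_mul_abs_rpow_lt hp (u i) (mul_ne_zero (by norm_num) hi)⟩
  simp only [sub_eq_add_neg, ← neg_mul] at hsum
  rw [← Finset.mul_sum, Finset.sum_add_distrib, h 2⁻¹ (by norm_num), h (-2⁻¹) (by norm_num)]
    at hsum
  have h0 := h 0 (by simp)
  simp only [zero_mul, add_zero] at h0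
  rw [h0] at hsum
  norm_num at hsum

theorem not_forall_iSup_abs_add_mul_eq (hq : 1 < q) :
    ¬ ∀ t : ℝ, ⨆ i, |u i + t * v i| = (1 + |t| ^ q) ^ (1 / q) := by
  intro h
  cases isEmpty_or_nonempty ι
  · simpa [zero_rpow (by linarith : q ≠ 0)] using h 0
  have hq0 : 0 < q := by linarith
  obtain ⟨i, hi⟩ : ∃ i, ∃ᶠ t in 𝓝[>] 0, (u i + t * v i) ^ 2 = (1 + t ^ q) ^ (2 / q) := by
    rw [← frequently_exists]
    refine Eventually.frequently (f := 𝓝[>] 0) (eventually_nhdsWithin_of_forall fun t ht => ?_)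
    replace ht : 0 < t := ht
    obtain ⟨i, hi⟩ := exists_eq_ciSup_of_finite (f := fun i => |u i + t * v i|)
    refine ⟨i, ?_⟩
    rw [← sq_abs, hi, h t, abs_of_pos ht, ← rpow_natCast, ← rpow_mul (by positivity)]
    ring_nf
  have hlim : ∀ k : ℕ, (k : ℝ) < q →
      Tendsto (fun t : ℝ => ((1 + t ^ q) ^ (2 / q) - 1) / t ^ k) (𝓝[>] 0) (𝓝 0) :=
    fun k hk => tendsto_one_add_rpow_rpow_sub_one_div_pow hk _
  have hu : u i ^ 2 = 1 := by
    refine tendsto_nhds_unique_of_frequently_eq ?_ ?_ hi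
    · have : Continuous fun t : ℝ => (u i + t * v i) ^ 2 := by fun_prop
      simpa using (this.tendsto 0).mono_left nhdsWithin_le_nhds
    · simpa using (hlim 0 (by simpa using hq0)).add_const 1
  have hv : v i = 0 := by
    have huv : 2 * (u i * v i) = 0 := by
      refine tendsto_nhds_unique_of_frequently_eq (f := fun t => 2 * (u i * v i) + t * v i ^ 2)
        ?_ (hlim 1 (by simpa using hq))
        (hi.mp (eventually_nhdsWithin_of_forall fun t (ht : 0 < t) heq => ?_))
      · have : Continuous fun t : ℝ => 2 * (u i * v i) + t * v i ^ 2 := by fun_prop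
        simpa using (this.tendsto 0).mono_left nhdsWithin_le_nhds
      · rw [pow_one, eq_div_iff ht.ne']
        linear_combination heq - hu
    have : u i ≠ 0 := by rintro h0; simp [h0] at hu
    simpa [this] using huv
  obtain ⟨t, heq, ht⟩ := (hi.and_eventually self_mem_nhdsWithin).exists
  have : 1 < (1 + t ^ q) ^ (2 / q) :=
    one_lt_rpow (by have := rpow_pos_of_pos (ht : (0 : ℝ) < t) q; linarith) (by positivity)
  rw [hv, mul_zero, add_zero, hu] at heq
  linarith

end LqLine

theorem lpNormR_rpow_toReal {r : ℝ≥0∞} (hr0 : r ≠ 0) (hr : r ≠ ∞) {n : ℕ} (x : Fin n → ℝ) :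
    lpNormR r x ^ r.toReal = ∑ i, |x i| ^ r.toReal := by
  rw [lpNormR, if_neg hr, ← rpow_mul (Finset.sum_nonneg fun i _ => by positivity),
    one_div_mul_cancel (ENNReal.toReal_ne_zero.2 ⟨hr0, hr⟩), rpow_one]

section PlaneVector

variable {m : ℕ}

def planeVec (a b : ℝ) : Fin (m + 2) → ℝ := Fin.cons a (Fin.cons b 0)

theorem planeVec_eq_smul_add_smul (a b : ℝ) :
    (planeVec a b : Fin (m + 2) → ℝ) = a • planeVec 1 0 + b • planeVec 0 1 := by
  ext j
  refine Fin.cases ?_ (fun j => Fin.cases ?_ (fun j => ?_) j) j <;> simp [planeVec]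

theorem lpNormR_planeVec {r : ℝ≥0∞} (hr0 : r ≠ 0) (hr : r ≠ ∞) (a b : ℝ) :
    lpNormR r (planeVec a b : Fin (m + 2) → ℝ) =
      (|a| ^ r.toReal + |b| ^ r.toReal) ^ (1 / r.toReal) := by
  simp [lpNormR, hr, planeVec, Fin.sum_univ_succ, zero_rpow (ENNReal.toReal_ne_zero.2 ⟨hr0, hr⟩)]

theorem lpNormR_top_planeVec (a b : ℝ) :
    lpNormR ∞ (planeVec a b : Fin (m + 2) → ℝ) = max |a| |b| := by
  rw [lpNormR, if_pos rfl]
  refine le_antisymm (ciSup_le fun j => ?_) (max_le ?_ ?_)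
  · refine Fin.cases ?_ (fun j => Fin.cases ?_ (fun j => ?_) j) j <;> simp [planeVec]
  · simpa [planeVec] using le_ciSup (f := fun j => |planeVec a b j|) (Finite.bddAbove_range _) 0
  · simpa [planeVec] using le_ciSup (f := fun j => |planeVec a b j|) (Finite.bddAbove_range _) 1

end PlaneVector

section IsometricLine

variable {m n : ℕ} {p q : ℝ≥0∞} {u v : Fin n → ℝ}

theorem not_forall_lpNormR_top_add_smul_eq (hq : 1 < q) (hqt : q ≠ ∞) :
    ¬ ∀ t : ℝ, lpNormR ∞ (u + t • v) = lpNormR q (planeVec 1 t : Fin (m + 2) → ℝ) := by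
  intro h
  refine not_forall_iSup_abs_add_mul_eq (u := u) (v := v)
    (by simpa using ENNReal.toReal_strict_mono hqt hq) fun t => ?_
  have := h t
  rw [lpNormR_planeVec (zero_lt_one.trans hq).ne' hqt, lpNormR, if_pos rfl] at this
  simpa using this

theorem not_forall_lpNormR_add_smul_eq_top (hp : 1 < p) (hpt : p ≠ ∞)
    (hv : lpNormR p v = lpNormR ∞ (planeVec 0 1 : Fin (m + 2) → ℝ)) :
    ¬ ∀ t : ℝ, lpNormR p (u + t • v) = lpNormR ∞ (planeVec 1 t : Fin (m + 2) → ℝ) := by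
  intro h
  have hp0 : p ≠ 0 := (zero_lt_one.trans hp).ne'
  have hp' : 1 < p.toReal := by simpa using ENNReal.toReal_strict_mono hpt hp
  have hv0 := eq_zero_of_forall_sum_abs_add_mul_rpow_eq_one (u := u) (v := v) hp' fun t ht => by
    simpa [lpNormR_rpow_toReal hp0 hpt, lpNormR_top_planeVec, ht] using
      congrArg (· ^ p.toReal) (h t)
  simpa [lpNormR_rpow_toReal hp0 hpt, lpNormR_top_planeVec, hv0,
    zero_rpow (zero_lt_one.trans hp').ne'] using congrArg (· ^ p.toReal) hv

theorem eq_of_forall_lpNormR_add_smul_eq (hp0 : p ≠ 0) (hpt : p ≠ ∞) (hq0 : q ≠ 0) (hqt : q ≠ ∞)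
    (hv : lpNormR p v = lpNormR q (planeVec 0 1 : Fin (m + 2) → ℝ))
    (h : ∀ t : ℝ, lpNormR p (u + t • v) = lpNormR q (planeVec 1 t : Fin (m + 2) → ℝ))
    (hpq : ¬ (q = 2 ∧ ∃ k : ℕ, 0 < k ∧ p = (2 * k : ℕ))) : p = q := by
  have hq' : 0 < q.toReal := ENNReal.toReal_pos hq0 hqt
  have hline : IsLqLine p.toReal q.toReal u v := fun t => by
    have := congrArg (· ^ p.toReal) (h t)
    simp only [lpNormR_rpow_toReal hp0 hpt, lpNormR_planeVec hq0 hqt, abs_one, one_rpow] at this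
    simpa [← rpow_mul (by positivity : 0 ≤ 1 + |t| ^ q.toReal), div_eq_inv_mul] using this
  refine (ENNReal.toReal_eq_toReal_iff' hpt hqt).1 <|
    hline.eq (ENNReal.toReal_pos hp0 hpt) hq' ?_ ?_
  · simpa [lpNormR_rpow_toReal hp0 hpt, lpNormR_planeVec hq0 hqt, zero_rpow hq'.ne'] using
      congrArg (· ^ p.toReal) hv
  · rintro ⟨hq2, k, hk, hpk⟩
    refine hpq ⟨?_, k, hk, ?_⟩
    · rw [← ENNReal.ofReal_toReal hqt, hq2, ENNReal.ofReal_ofNat]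
    · rw [← ENNReal.ofReal_toReal hpt, hpk, ← ENNReal.ofReal_natCast]
      push_cast
      rfl

end IsometricLine

theorem no_isometric_embedding_lq_lp_real_general (m n : ℕ) (hm : 2 ≤ m)
    (q p : ℝ≥0∞) (hq : 1 ≤ q) (hp : 1 ≤ p) (hqp : q ≠ p)
    (hnot : ¬ (q = 2 ∧ ∃ k : ℕ, 0 < k ∧ p = (2 * k : ℕ)))
    (hnot' : ¬ ((q = 1 ∨ q = ∞) ∧ (p = 1 ∨ p = ∞))) :
    ¬ ∃ T : (Fin m → ℝ) →ₗ[ℝ] (Fin n → ℝ), ∀ x, lpNormR p (T x) = lpNormR q x := by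
  rintro ⟨T, hT⟩
  obtain ⟨m, rfl⟩ : ∃ k, m = k + 2 := ⟨m - 2, by omega⟩
  have hline : ∀ t : ℝ, lpNormR p (T (planeVec 1 0) + t • T (planeVec 0 1)) =
      lpNormR q (planeVec 1 t : Fin (m + 2) → ℝ) := fun t => by
    rw [← hT, planeVec_eq_smul_add_smul 1 t, one_smul, map_add, map_smul]
  have hv := hT (planeVec 0 1)
  rcases eq_or_ne p ∞ with rfl | hpt
  · exact not_forall_lpNormR_top_add_smul_eq
      (hq.lt_of_ne' fun h => hnot' ⟨.inl h, .inr rfl⟩) hqp hline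
  rcases eq_or_ne q ∞ with rfl | hqt
  · exact not_forall_lpNormR_add_smul_eq_top
      (hp.lt_of_ne' fun h => hnot' ⟨.inr rfl, .inl h⟩) hpt hv hline
  exact hqp (eq_of_forall_lpNormR_add_smul_eq (zero_lt_one.trans_le hp).ne' hpt
    (zero_lt_one.trans_le hq).ne' hqt hv hline hnot).symm

/-- For `2 ≤ m ≤ n` and `q, p ∈ [1,∞]` with `q ≠ p`, unless `q = 2` and `p` is an even
positive integer, or both `q ∈ {1,∞}` and `p ∈ {1,∞}`, the space `ℓ_q^m(ℝ)` does not
embed isometrically into `ℓ_p^n(ℝ)`. -/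
theorem no_isometric_embedding_lq_lp_real (m n : ℕ) (hm : 2 ≤ m) (hmn : m ≤ n)
    (q p : ℝ≥0∞) (hq : 1 ≤ q) (hp : 1 ≤ p) (hqp : q ≠ p)
    (hnot : ¬ (q = 2 ∧ ∃ k : ℕ, 0 < k ∧ p = (2 * k : ℕ)))
    (hnot' : ¬ ((q = 1 ∨ q = ∞) ∧ (p = 1 ∨ p = ∞))) :
    ¬ ∃ T : (Fin m → ℝ) →ₗ[ℝ] (Fin n → ℝ), ∀ x, lpNormR p (T x) = lpNormR q x :=
  no_isometric_embedding_lq_lp_real_general m n hm q p hq hp hqp hnot hnot'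
end

section
/- Let m, n be integers with 2 ≤ m ≤ n, let q ∈ (0,∞) be a real number that is not an even positive integer, and let p ∈ (0,1) with q ≠ p. Then there is no linear map T : ℂ^m → ℂ^n such that (Σ_{j=1}^n |(Tx)_j|^p)^{1/p} = (Σ_{i=1}^m |x_i|^q)^{1/q} for all x ∈ ℂ^m; that is, ℓ_q^m(ℂ) does not embed isometrically into ℓ_p^n(ℂ). -/
/-!
Restrict a putative isometry `T` to the span of two unit vectors `e₀, e₁` and put
`a = T e₀`, `b = T e₁`. For real `t`, `∑ⱼ ‖aⱼ + t bⱼ‖ᵖ = (1 + |t|^q)^(p/q)`. The coordinates with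
`aⱼ ≠ 0` contribute a real-analytic function of `t` near `0`, those with `aⱼ = 0` contribute
`c |t|ᵖ`, so `t ↦ (1 + |t|^q)^(p/q) - c |t|ᵖ` would be analytic at `0`. It is not: minus `1`, it
behaves like `K |t|^e` with `K ≠ 0` and `e ∈ {p, q}`, whereas a nonzero analytic function behaves
like `g₀ tᵏ`. Comparing on `t > 0` forces `e = k`, and evenness in `t` forces `k` to be even; but
neither `p` nor `q` is an even positive integer.
-/

open Filter Topology

theorem AnalyticAt.rpow_const_of_pos {E : Type*} [NormedAddCommGroup E] [NormedSpace ℝ E]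
    {f : E → ℝ} {x : E} (hf : AnalyticAt ℝ f x) (hx : 0 < f x) (a : ℝ) :
    AnalyticAt ℝ (fun y => f y ^ a) x := by
  have hlog : AnalyticAt ℝ (fun y => Real.log (f y)) x := (analyticAt_log hx).comp hf
  have hexp : AnalyticAt ℝ (fun y => Real.exp (Real.log (f y) * a)) x :=
    analyticAt_rexp.comp (hlog.mul analyticAt_const)
  refine hexp.congr ?_
  filter_upwards [hf.continuousAt.eventually (lt_mem_nhds hx)] with y hy
  exact (Real.rpow_def_of_pos hy a).symm

theorem analyticAt_rpow_norm_add_smul {F : Type*} [NormedAddCommGroup F]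
    [InnerProductSpace ℝ F] {a : F} (ha : a ≠ 0) (b : F) (p : ℝ) :
    AnalyticAt ℝ (fun t : ℝ => ‖a + t • b‖ ^ p) 0 := by
  have hsq : AnalyticAt ℝ (fun t : ℝ => ‖a + t • b‖ ^ 2) 0 := by
    have : AnalyticAt ℝ (fun t : ℝ => ‖a‖ ^ 2 + 2 * (t * inner ℝ a b) + (t * ‖b‖) ^ 2) 0 := by
      fun_prop
    refine this.congr (.of_forall fun t => ?_)
    simp only [norm_add_sq_real, real_inner_smul_right, norm_smul, Real.norm_eq_abs, mul_pow,
      sq_abs]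
  refine (hsq.rpow_const_of_pos (by simpa using pow_pos (norm_pos_iff.mpr ha) 2) (p / 2)).congr
    (.of_forall fun t => ?_)
  dsimp only
  rw [← Real.rpow_natCast, ← Real.rpow_mul (norm_nonneg _)]
  ring_nf

theorem exists_analyticAt_sum_rpow_norm_add_smul_sub {F : Type*} [NormedAddCommGroup F]
    [InnerProductSpace ℝ F] {ι : Type*} [Fintype ι] (a b : ι → F) (p : ℝ) :
    ∃ c : ℝ, AnalyticAt ℝ (fun t : ℝ => ∑ j, ‖a j + t • b j‖ ^ p - c * |t| ^ p) 0 := by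
  classical
  refine ⟨∑ j with a j = 0, ‖b j‖ ^ p, ?_⟩
  have hsplit : ∀ t : ℝ, ∑ j, ‖a j + t • b j‖ ^ p - (∑ j with a j = 0, ‖b j‖ ^ p) * |t| ^ p
      = ∑ j with a j ≠ 0, ‖a j + t • b j‖ ^ p := by
    intro t
    rw [← Finset.sum_filter_add_sum_filter_not Finset.univ (fun j => a j = 0), Finset.sum_mul,
      add_sub_right_comm, sub_eq_zero_of_eq, zero_add]
    refine Finset.sum_congr rfl fun j hj => ?_
    rw [(Finset.mem_filter.mp hj).2, zero_add, norm_smul, Real.norm_eq_abs,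
      Real.mul_rpow (abs_nonneg t) (norm_nonneg _), mul_comm]
  simp_rw [hsplit]
  exact Finset.analyticAt_fun_sum _ fun j hj =>
    analyticAt_rpow_norm_add_smul (Finset.mem_filter.mp hj).2 (b j) p

theorem tendsto_rpow_nhdsGT_zero {e : ℝ} (he : 0 < e) :
    Tendsto (fun t : ℝ => t ^ e) (𝓝[>] 0) (𝓝 0) := by
  simpa [Real.zero_rpow he.ne'] using
    (Real.continuousAt_rpow_const 0 e (.inr he.le)).tendsto.mono_left nhdsWithin_le_nhds

theorem tendsto_one_add_rpow_sub_one_div (a : ℝ) :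
    Tendsto (fun u : ℝ => ((1 + u) ^ a - 1) / u) (𝓝[≠] 0) (𝓝 a) := by
  have hderiv : HasDerivAt (fun u : ℝ => (1 + u) ^ a) a 0 := by
    simpa using
      (Real.hasDerivAt_rpow_const (p := a) (x := 1 + 0) (.inl (by norm_num))).comp_const_add 1 0
  refine (hasDerivAt_iff_tendsto_slope.mp hderiv).congr fun u => ?_
  simp [slope_def_field]

theorem tendsto_one_add_rpow_rpow_sub_one_div {q : ℝ} (hq : 0 < q) (a : ℝ) :
    Tendsto (fun s : ℝ => ((1 + s ^ q) ^ a - 1) / s ^ q) (𝓝[>] 0) (𝓝 a) := by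
  refine (tendsto_one_add_rpow_sub_one_div a).comp (tendsto_nhdsWithin_iff.mpr
    ⟨tendsto_rpow_nhdsGT_zero hq, ?_⟩)
  filter_upwards [self_mem_nhdsWithin] with s hs
  exact (Real.rpow_pos_of_pos hs q).ne'

theorem exists_tendsto_one_add_rpow_sub_rpow_div {p q : ℝ} (hp : 0 < p) (hq : 0 < q)
    (hqp : q ≠ p) (c : ℝ) :
    ∃ e ∈ ({p, q} : Set ℝ), ∃ K ≠ 0,
      Tendsto (fun s : ℝ => ((1 + s ^ q) ^ (p / q) - c * s ^ p - 1) / s ^ e) (𝓝[>] 0) (𝓝 K) := by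
  have hmain := tendsto_one_add_rpow_rpow_sub_one_div hq (p / q)
  by_cases hcq : c = 0 ∨ q < p
  · refine ⟨q, by simp, p / q, by positivity, ?_⟩
    have hc : Tendsto (fun s : ℝ => c * s ^ (p - q)) (𝓝[>] 0) (𝓝 0) := by
      rcases hcq with rfl | hlt
      · simp
      · simpa using (tendsto_rpow_nhdsGT_zero (sub_pos.mpr hlt)).const_mul c
    have hlim := hmain.sub hc
    rw [sub_zero] at hlim
    refine hlim.congr' ?_
    filter_upwards [self_mem_nhdsWithin] with s hs
    have := (Real.rpow_pos_of_pos hs q).ne'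
    rw [Real.rpow_sub hs]
    field_simp
    ring
  · refine ⟨p, by simp, -c, by simpa using (not_or.mp hcq).1, ?_⟩
    have hlt : p < q := lt_of_le_of_ne (not_lt.mp (not_or.mp hcq).2) hqp.symm
    have hlim := (hmain.mul (tendsto_rpow_nhdsGT_zero (sub_pos.mpr hlt))).sub
      (tendsto_const_nhds (x := c))
    rw [mul_zero, zero_sub] at hlim
    refine hlim.congr' ?_
    filter_upwards [self_mem_nhdsWithin] with s hs
    have := (Real.rpow_pos_of_pos hs q).ne'
    have := (Real.rpow_pos_of_pos hs p).ne'
    rw [Real.rpow_sub hs]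
    field_simp
    ring

theorem AnalyticAt.exists_tendsto_div_pow {𝕜 : Type*} [NontriviallyNormedField 𝕜]
    {f : 𝕜 → 𝕜} (hf : AnalyticAt 𝕜 f 0) (hf0 : ¬ ∀ᶠ t in 𝓝 0, f t = 0) :
    ∃ (k : ℕ) (g₀ : 𝕜), g₀ ≠ 0 ∧ Tendsto (fun t => f t / t ^ k) (𝓝[≠] 0) (𝓝 g₀) := by
  obtain ⟨k, g, hg, hg0, hfg⟩ := hf.exists_eventuallyEq_pow_smul_nonzero_iff.mpr hf0
  refine ⟨k, g 0, hg0, (hg.continuousAt.tendsto.mono_left nhdsWithin_le_nhds).congr' ?_⟩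
  filter_upwards [nhdsWithin_le_nhds hfg, self_mem_nhdsWithin] with t ht ht0
  rw [ht, sub_zero, smul_eq_mul, mul_div_cancel_left₀ _ (pow_ne_zero _ ht0)]

theorem even_of_tendsto_div_pow {f : ℝ → ℝ} (hf : ∀ t, f (-t) = f t) {k : ℕ} {g₀ : ℝ}
    (hg₀ : g₀ ≠ 0) (h : Tendsto (fun t => f t / t ^ k) (𝓝[≠] 0) (𝓝 g₀)) : Even k := by
  have hneg : Tendsto (fun t : ℝ => -t) (𝓝[≠] 0) (𝓝[≠] 0) := tendsto_nhdsWithin_iff.mpr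
    ⟨(continuous_neg.tendsto' 0 0 neg_zero).mono_left nhdsWithin_le_nhds,
      eventually_mem_nhdsWithin.mono fun t ht => neg_ne_zero.mpr ht⟩
  have hflip : Tendsto (fun t => (-1) ^ k * (f t / t ^ k)) (𝓝[≠] 0) (𝓝 g₀) := by
    refine (h.comp hneg).congr fun t => ?_
    rw [Function.comp_apply, hf, neg_pow, mul_comm ((-1 : ℝ) ^ k), ← div_div,
      div_eq_mul_inv _ ((-1 : ℝ) ^ k), ← inv_pow, inv_neg_one, mul_comm]
  have := tendsto_nhds_unique (h.const_mul _) hflip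
  rw [← neg_one_pow_eq_one_iff_even (R := ℝ) (by norm_num)]
  exact mul_right_cancel₀ hg₀ (this.trans (one_mul g₀).symm)

theorem tendsto_div_rpow_zero_of_lt {f : ℝ → ℝ} {a b B : ℝ} (hab : a < b)
    (h : Tendsto (fun t => f t / t ^ b) (𝓝[>] 0) (𝓝 B)) :
    Tendsto (fun t => f t / t ^ a) (𝓝[>] 0) (𝓝 0) := by
  have hlim := h.mul (tendsto_rpow_nhdsGT_zero (sub_pos.mpr hab))
  rw [mul_zero] at hlim
  refine hlim.congr' ?_
  filter_upwards [self_mem_nhdsWithin] with t ht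
  have := (Real.rpow_pos_of_pos ht a).ne'
  have := (Real.rpow_pos_of_pos ht b).ne'
  rw [Real.rpow_sub ht]
  field_simp

theorem eq_of_tendsto_div_rpow {f : ℝ → ℝ} {a b A B : ℝ} (hA : A ≠ 0) (hB : B ≠ 0)
    (ha : Tendsto (fun t => f t / t ^ a) (𝓝[>] 0) (𝓝 A))
    (hb : Tendsto (fun t => f t / t ^ b) (𝓝[>] 0) (𝓝 B)) : a = b := by
  rcases lt_trichotomy a b with hab | rfl | hba
  · exact absurd (tendsto_nhds_unique ha (tendsto_div_rpow_zero_of_lt hab hb)) hA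
  · rfl
  · exact absurd (tendsto_nhds_unique hb (tendsto_div_rpow_zero_of_lt hba ha)) hB

theorem not_eventually_eq_zero_of_tendsto_div_rpow {f : ℝ → ℝ} {e K : ℝ} (hK : K ≠ 0)
    (h : Tendsto (fun t => f t / t ^ e) (𝓝[>] 0) (𝓝 K)) : ¬ ∀ᶠ t in 𝓝 0, f t = 0 := by
  intro hf
  refine hK (tendsto_nhds_unique h (tendsto_const_nhds.congr' ?_))
  filter_upwards [hf.filter_mono nhdsWithin_le_nhds] with t ht
  rw [ht, zero_div]

theorem not_analyticAt_one_add_abs_rpow_rpow_sub {p q : ℝ} (hp : 0 < p) (hq : 0 < q)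
    (hqp : q ≠ p) (hpe : ¬ ∃ k : ℕ, 0 < k ∧ p = 2 * k) (hqe : ¬ ∃ k : ℕ, 0 < k ∧ q = 2 * k)
    (c : ℝ) : ¬ AnalyticAt ℝ (fun t : ℝ => (1 + |t| ^ q) ^ (p / q) - c * |t| ^ p) 0 := by
  intro hα
  set f : ℝ → ℝ := fun t => (1 + |t| ^ q) ^ (p / q) - c * |t| ^ p - 1 with hf_def
  have hf : AnalyticAt ℝ f 0 := hα.sub analyticAt_const
  obtain ⟨e, he, K, hK, hlimK⟩ := exists_tendsto_one_add_rpow_sub_rpow_div hp hq hqp c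
  have hfK : Tendsto (fun t => f t / t ^ e) (𝓝[>] 0) (𝓝 K) := by
    refine hlimK.congr' ?_
    filter_upwards [self_mem_nhdsWithin] with t (ht : 0 < t)
    simp only [hf_def, abs_of_pos ht]
  obtain ⟨k, g₀, hg₀, hfg⟩ :=
    hf.exists_tendsto_div_pow (not_eventually_eq_zero_of_tendsto_div_rpow hK hfK)
  obtain ⟨j, rfl⟩ : Even k :=
    even_of_tendsto_div_pow (fun t => by simp only [hf_def, abs_neg]) hg₀ hfg
  have hke : ((j + j : ℕ) : ℝ) = e := by
    refine eq_of_tendsto_div_rpow hg₀ hK ((hfg.mono_left (nhdsGT_le_nhdsNE 0)).congr ?_) hfK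
    intro t
    rw [Real.rpow_natCast]
  have he_pos : 0 < e := by rcases he with rfl | rfl <;> assumption
  have he_eq : e = 2 * j := by push_cast at hke; linarith
  have hj : 0 < j := by exact_mod_cast (show (0 : ℝ) < j by linarith)
  rcases he with rfl | rfl
  · exact hpe ⟨j, hj, he_eq⟩
  · exact hqe ⟨j, hj, he_eq⟩

theorem sum_rpow_norm_single_add_smul_single {ι : Type*} [Fintype ι] [DecidableEq ι]
    {i₀ i₁ : ι} (hi : i₀ ≠ i₁) {q : ℝ} (hq : q ≠ 0) (t : ℝ) :
    ∑ i, ‖((Pi.single i₀ 1 : ι → ℂ) + t • (Pi.single i₁ 1 : ι → ℂ)) i‖ ^ q = 1 + |t| ^ q := by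
  rw [Fintype.sum_eq_add i₀ i₁ hi fun i hi' => by simp [hi'.1, hi'.2, Real.zero_rpow hq]]
  simp [hi, hi.symm]

theorem exists_sum_rpow_norm_add_smul_eq {ι κ : Type*} [Fintype ι] [Fintype κ]
    {i₀ i₁ : ι} (hi : i₀ ≠ i₁) {p q : ℝ} (hp : p ≠ 0) (hq : q ≠ 0)
    (T : (ι → ℂ) →ₗ[ℂ] (κ → ℂ))
    (hT : ∀ x, (∑ j, ‖T x j‖ ^ p) ^ (1 / p) = (∑ i, ‖x i‖ ^ q) ^ (1 / q)) :
    ∃ a b : κ → ℂ, ∀ t : ℝ, ∑ j, ‖a j + t • b j‖ ^ p = (1 + |t| ^ q) ^ (p / q) := by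
  classical
  set a := T (Pi.single i₀ 1)
  set b := T (Pi.single i₁ 1)
  refine ⟨a, b, fun t => ?_⟩
  have hx := hT ((Pi.single i₀ 1 : ι → ℂ) + t • (Pi.single i₁ 1 : ι → ℂ))
  rw [sum_rpow_norm_single_add_smul_single hi hq, map_add, LinearMap.map_smul_of_tower] at hx
  have hS : 0 ≤ ∑ j, ‖a j + t • b j‖ ^ p := by positivity
  calc ∑ j, ‖a j + t • b j‖ ^ p = ((∑ j, ‖a j + t • b j‖ ^ p) ^ (1 / p)) ^ p := by
        rw [← Real.rpow_mul hS, one_div_mul_cancel hp, Real.rpow_one]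
    _ = (1 + |t| ^ q) ^ (p / q) := by
        simp only [Pi.add_apply, Pi.smul_apply] at hx
        rw [hx, ← Real.rpow_mul (by positivity), one_div_mul_eq_div]

theorem no_isometric_embedding_lq_lp_quasi_complex_general (m n : ℕ) (hm : 2 ≤ m)
    (q p : ℝ) (hq : 0 < q) (hqe : ¬ ∃ k : ℕ, 0 < k ∧ q = 2 * k)
    (hp0 : 0 < p) (hp1 : p < 1) (hqp : q ≠ p) :
    ¬ ∃ T : (Fin m → ℂ) →ₗ[ℂ] (Fin n → ℂ),
      ∀ x : Fin m → ℂ,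
        (∑ j, ‖T x j‖ ^ p) ^ (1 / p) = (∑ i, ‖x i‖ ^ q) ^ (1 / q) := by
  rintro ⟨T, hT⟩
  obtain ⟨a, b, hab⟩ := exists_sum_rpow_norm_add_smul_eq (i₀ := ⟨0, by omega⟩)
    (i₁ := ⟨1, by omega⟩) (by simp [Fin.ext_iff]) hp0.ne' hq.ne' T hT
  obtain ⟨c, hc⟩ := exists_analyticAt_sum_rpow_norm_add_smul_sub a b p
  simp only [hab] at hc
  have hpe : ¬ ∃ k : ℕ, 0 < k ∧ p = 2 * k := fun ⟨k, hk, hpk⟩ => by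
    have : (1 : ℝ) ≤ k := by exact_mod_cast hk
    linarith
  exact not_analyticAt_one_add_abs_rpow_rpow_sub hp0 hq hqp hpe hqe c hc

/-- For `2 ≤ m ≤ n`, `q ∈ (0,∞)` not an even positive integer, and `p ∈ (0,1)` with
`q ≠ p`, the space `ℓ_q^m(ℂ)` does not embed isometrically into `ℓ_p^n(ℂ)`: there is no
linear `T : ℂ^m → ℂ^n` with `(Σ_j |(Tx)_j|^p)^{1/p} = (Σ_i |x_i|^q)^{1/q}` for all `x`. -/
theorem no_isometric_embedding_lq_lp_quasi_complex (m n : ℕ) (hm : 2 ≤ m) (hmn : m ≤ n)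
    (q p : ℝ) (hq : 0 < q) (hqe : ¬ ∃ k : ℕ, 0 < k ∧ q = 2 * k)
    (hp0 : 0 < p) (hp1 : p < 1) (hqp : q ≠ p) :
    ¬ ∃ T : (Fin m → ℂ) →ₗ[ℂ] (Fin n → ℂ),
      ∀ x : Fin m → ℂ,
        (∑ j, ‖T x j‖ ^ p) ^ (1 / p) = (∑ i, ‖x i‖ ^ q) ^ (1 / q) :=
  no_isometric_embedding_lq_lp_quasi_complex_general m n hm q p hq hqe hp0 hp1 hqp
end

section
/- Let m, n be integers with 2 ≤ m ≤ n, let q ∈ (0,∞), and let p ∈ (0,1) with q ≠ p. Then there is no linear map T : ℝ^m → ℝ^n such that (Σ_{j=1}^n |(Tx)_j|^p)^{1/p} = (Σ_{i=1}^m |x_i|^q)^{1/q} for all x ∈ ℝ^m; that is, ℓ_q^m(ℝ) does not embed isometrically into ℓ_p^n(ℝ). -/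
/-!
Restrict `T` to the plane spanned by two coordinate vectors and put `a = T e₀`, `b = T e₁`.
Then `φ t = ∑ j, |a j + t * b j| ^ p` equals `(1 + |t| ^ q) ^ (p / q)`, which is differentiable
at every `t ≠ 0`. If some `a j` and `b j` were both nonzero, then at `t₀ = -a j / b j ≠ 0` the
function `φ` would contain the cusp `C * |t - t₀| ^ p`, `C > 0`, which is not differentiable
because `p < 1`. Hence `a` and `b` are disjointly supported, so `φ 1 = φ 0 + ∑ j, |b j| ^ p = 2`,
i.e. `2 ^ (p / q) = 2`, forcing `p = q`.
-/

open Filter Real Topology Finset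

lemma not_differentiableAt_const_mul_abs_sub_rpow {C t₀ p : ℝ} (hC : 0 < C) (hp0 : 0 < p)
    (hp1 : p < 1) : ¬ DifferentiableAt ℝ (fun t => C * |t - t₀| ^ p) t₀ := by
  intro h
  have hblowup : Tendsto (fun t : ℝ => C * t ^ (p - 1)) (𝓝[>] 0) atTop :=
    (tendsto_rpow_neg_nhdsGT_zero (by linarith)).const_mul_atTop hC
  refine not_tendsto_nhds_of_tendsto_atTop hblowup _
    (h.hasDerivAt.tendsto_slope_zero_right.congr' ?_)
  filter_upwards [self_mem_nhdsWithin] with t (ht : 0 < t)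
  simp only [add_sub_cancel_left, sub_self, abs_zero, zero_rpow hp0.ne', mul_zero, sub_zero,
    abs_of_pos ht, smul_eq_mul, rpow_sub_one ht.ne']
  ring

lemma eq_zero_of_differentiableAt_sum_abs_add_mul_rpow {ι : Type*} [Fintype ι] {a b : ι → ℝ}
    {p t₀ : ℝ} (hp0 : 0 < p) (hp1 : p < 1)
    (h : DifferentiableAt ℝ (fun t => ∑ k, |a k + t * b k| ^ p) t₀) {j : ι}
    (hj : a j + t₀ * b j = 0) : b j = 0 := by
  classical
  by_contra hbj
  set S := univ.filter fun k => a k + t₀ * b k = 0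
  have hsplit : ∀ t, ∑ k, |a k + t * b k| ^ p
      = (∑ k ∈ S, |b k| ^ p) * |t - t₀| ^ p + ∑ k ∈ Sᶜ, |a k + t * b k| ^ p := by
    intro t
    rw [← sum_add_sum_compl S, sum_mul]
    congr 1
    refine sum_congr rfl fun k hk => ?_
    have hak : a k + t * b k = (t - t₀) * b k := by
      linear_combination (mem_filter.mp hk).2
    rw [hak, abs_mul, mul_rpow (abs_nonneg _) (abs_nonneg _), mul_comm]
  have hrest : DifferentiableAt ℝ (fun t => ∑ k ∈ Sᶜ, |a k + t * b k| ^ p) t₀ := by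
    refine DifferentiableAt.fun_sum fun k hk => ?_
    have hk0 : a k + t₀ * b k ≠ 0 := by simpa [S] using hk
    exact ((by fun_prop : DifferentiableAt ℝ (fun t => a k + t * b k) t₀).abs hk0).rpow_const
      (Or.inl (abs_ne_zero.mpr hk0))
  have hC : 0 < ∑ k ∈ S, |b k| ^ p :=
    sum_pos' (fun k _ => by positivity) ⟨j, by simp [S, hj], by positivity⟩
  refine not_differentiableAt_const_mul_abs_sub_rpow (t₀ := t₀) hC hp0 hp1 ?_
  simpa [hsplit] using h.fun_sub hrest

lemma eq_zero_or_eq_zero_of_differentiableAt_sum_abs_add_mul_rpow {ι : Type*} [Fintype ι]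
    {a b : ι → ℝ} {p : ℝ} (hp0 : 0 < p) (hp1 : p < 1)
    (h : ∀ t ≠ 0, DifferentiableAt ℝ (fun t => ∑ k, |a k + t * b k| ^ p) t) (j : ι) :
    a j = 0 ∨ b j = 0 := by
  by_contra! hab
  obtain ⟨haj, hbj⟩ := hab
  have hroot : a j + -a j / b j * b j = 0 := by field_simp; ring
  exact hbj <| eq_zero_of_differentiableAt_sum_abs_add_mul_rpow hp0 hp1
    (h _ (div_ne_zero (neg_ne_zero.mpr haj) hbj)) hroot

lemma sum_abs_rpow_single_add_single {ι : Type*} [Fintype ι] [DecidableEq ι] {i j : ι}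
    (hij : i ≠ j) {q : ℝ} (hq : q ≠ 0) (s t : ℝ) :
    ∑ k, |(Pi.single i s + Pi.single j t : ι → ℝ) k| ^ q = |s| ^ q + |t| ^ q := by
  rw [sum_eq_add i j hij (fun k _ hk => by simp [hk.1, hk.2, zero_rpow hq])]
    <;> simp [hij, hij.symm]

lemma sum_abs_add_rpow_of_disjoint {ι : Type*} [Fintype ι] {a b : ι → ℝ} {p : ℝ} (hp : p ≠ 0)
    (hab : ∀ j, a j = 0 ∨ b j = 0) :
    ∑ j, |a j + b j| ^ p = ∑ j, |a j| ^ p + ∑ j, |b j| ^ p := by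
  rw [← sum_add_distrib]
  refine sum_congr rfl fun j _ => ?_
  rcases hab j with h | h <;> simp [h, zero_rpow hp]

lemma differentiableAt_one_add_abs_rpow_rpow {t : ℝ} (ht : t ≠ 0) (q r : ℝ) :
    DifferentiableAt ℝ (fun t : ℝ => (1 + |t| ^ q) ^ r) t :=
  (((differentiableAt_abs ht).rpow_const (Or.inl (abs_ne_zero.mpr ht))).const_add 1).rpow_const
    (Or.inl (by positivity))

lemma sum_abs_rpow_smul_add_smul_of_isometry {ι κ : Type*} [Fintype ι] [DecidableEq ι]
    [Fintype κ] {p q : ℝ} (hp : 0 < p) (hq : q ≠ 0) {T : (ι → ℝ) →ₗ[ℝ] (κ → ℝ)}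
    (hT : ∀ x, (∑ k, |T x k| ^ p) ^ (1 / p) = (∑ i, |x i| ^ q) ^ (1 / q))
    {i j : ι} (hij : i ≠ j) (s t : ℝ) :
    ∑ k, |s * T (Pi.single i 1) k + t * T (Pi.single j 1) k| ^ p
      = (|s| ^ q + |t| ^ q) ^ (p / q) := by
  have hTx : T (Pi.single i s + Pi.single j t)
      = s • T (Pi.single i 1) + t • T (Pi.single j 1) := by
    rw [← map_smul, ← map_smul, ← map_add, ← Pi.single_smul', ← Pi.single_smul',
      smul_eq_mul, smul_eq_mul, mul_one, mul_one]
  have hx := hT (Pi.single i s + Pi.single j t)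
  rw [sum_abs_rpow_single_add_single hij hq, hTx] at hx
  simp only [Pi.add_apply, Pi.smul_apply, smul_eq_mul] at hx
  rwa [one_div, rpow_inv_eq (by positivity) (by positivity) hp.ne', ← rpow_mul (by positivity),
    one_div_mul_eq_div] at hx

theorem no_isometric_embedding_lq_lp_quasi_real_general (m n : ℕ) (hm : 2 ≤ m)
    (q p : ℝ) (hq : 0 < q) (hp0 : 0 < p) (hp1 : p < 1) (hqp : q ≠ p) :
    ¬ ∃ T : (Fin m → ℝ) →ₗ[ℝ] (Fin n → ℝ),
      ∀ x : Fin m → ℝ,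
        (∑ j, |T x j| ^ p) ^ (1 / p) = (∑ i, |x i| ^ q) ^ (1 / q) := by
  rintro ⟨T, hT⟩
  obtain ⟨i₀, i₁, hi⟩ := (Fin.nontrivial_iff_two_le.mpr hm).exists_pair_ne
  have hplane := sum_abs_rpow_smul_add_smul_of_isometry hp0 hq.ne' hT hi
  set a := T (Pi.single i₀ 1)
  set b := T (Pi.single i₁ 1)
  have ha : ∑ j, |a j| ^ p = 1 := by simpa [zero_rpow hq.ne'] using hplane 1 0
  have hb : ∑ j, |b j| ^ p = 1 := by simpa [zero_rpow hq.ne'] using hplane 0 1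
  have hdisjoint : ∀ j, a j = 0 ∨ b j = 0 := by
    refine eq_zero_or_eq_zero_of_differentiableAt_sum_abs_add_mul_rpow hp0 hp1 fun t ht => ?_
    have hline : (fun t => ∑ k, |a k + t * b k| ^ p) = fun t => (1 + |t| ^ q) ^ (p / q) :=
      funext fun t => by simpa using hplane 1 t
    exact hline ▸ differentiableAt_one_add_abs_rpow_rpow ht q (p / q)
  have htwo : (2 : ℝ) ^ (p / q) = 2 ^ (1 : ℝ) := by
    have h11 := hplane 1 1
    norm_num [sum_abs_add_rpow_of_disjoint hp0.ne' hdisjoint, ha, hb] at h11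
    rw [rpow_one, ← h11]
  rw [rpow_right_inj two_pos (by norm_num), div_eq_one_iff_eq hq.ne'] at htwo
  exact hqp htwo.symm

/-- For `2 ≤ m ≤ n`, `q ∈ (0,∞)`, and `p ∈ (0,1)` with `q ≠ p`, the space `ℓ_q^m(ℝ)`
does not embed isometrically into `ℓ_p^n(ℝ)`: there is no linear `T : ℝ^m → ℝ^n` with
`(Σ_j |(Tx)_j|^p)^{1/p} = (Σ_i |x_i|^q)^{1/q}` for all `x`. -/
theorem no_isometric_embedding_lq_lp_quasi_real (m n : ℕ) (hm : 2 ≤ m) (hmn : m ≤ n)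
    (q p : ℝ) (hq : 0 < q) (hp0 : 0 < p) (hp1 : p < 1) (hqp : q ≠ p) :
    ¬ ∃ T : (Fin m → ℝ) →ₗ[ℝ] (Fin n → ℝ),
      ∀ x : Fin m → ℝ,
        (∑ j, |T x j| ^ p) ^ (1 / p) = (∑ i, |x i| ^ q) ^ (1 / q) :=
  no_isometric_embedding_lq_lp_quasi_real_general m n hm q p hq hp0 hp1 hqp
end

section
/- Let H be a complex separable Hilbert space with dim H ≥ 2. Then there is no linear map J from ℂ² into the space of compact operators on H such that the operator norm of J(a) equals |a₁| + |a₂| for all a = (a₁, a₂) ∈ ℂ²; that is, ℓ_1²(ℂ) does not embed isometrically into S_∞(H). -/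
/-!
Put `A = J e₀` and `B = J e₁`, so `‖A‖ = ‖B‖ = 1` and `‖A + c • B‖ = 2` for every unimodular `c`.
For unimodular `ν`, a vector nearly attaining the norm of `A + ν̄ • B` is an approximate
eigenvector of the compact operator `C = A† B` for `ν`, because
`‖C x - ν • x‖² ≤ 4 ‖x‖² - ‖(A + ν̄ • B) x‖²`. By the Fredholm alternative, every point of the unit
circle is then an eigenvalue of `C`. But a compact operator has only finitely many eigenvalues of
modulus at least `r > 0`: Gram–Schmidt applied to eigenvectors yields unit vectors whose images
are `r`-separated.
-/

open Metric Module End Submodule Set InnerProductSpace ContinuousLinearMap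
open scoped InnerProductSpace InnerProduct ComplexConjugate

theorem finite_of_isCompact_of_pairwise_le_dist {ι X : Type*} [MetricSpace X] {K : Set X}
    (hK : IsCompact K) {f : ι → X} (hfK : ∀ i, f i ∈ K) {ε : ℝ} (hε : 0 < ε)
    (hf : Pairwise fun i j => ε ≤ dist (f i) (f j)) : Finite ι := by
  let _ : TopologicalSpace ι := ⊥
  have : DiscreteTopology ι := ⟨rfl⟩
  have hcomp := (isClosedEmbedding_of_pairwise_le_dist hε hf).isCompact_preimage hK
  rw [Set.preimage_eq_univ_iff.2 (Set.range_subset_iff.2 hfK), isCompact_univ_iff] at hcomp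
  exact finite_of_compact_of_discrete

section NormedSpace

variable {𝕜 X : Type*} [NontriviallyNormedField 𝕜] [NormedAddCommGroup X] [NormedSpace 𝕜 X]
  {T : X →L[𝕜] X} {μ : 𝕜}

namespace IsCompactOperator

theorem hasEigenvalue_of_forall_exists_norm_sub_smul_lt (hT : IsCompactOperator T) (hμ : μ ≠ 0)
    (h : ∀ ε > 0, ∃ x, ‖T x - μ • x‖ < ε * ‖x‖) : HasEigenvalue (T : End 𝕜 X) μ := by
  by_contra hne
  obtain ⟨K, hK⟩ := antilipschitz_of_not_hasEigenvalue hT hμ hne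
  obtain ⟨x, hx⟩ := h ((K : ℝ) + 1)⁻¹ (by positivity)
  rw [lt_inv_mul_iff₀ (by positivity)] at hx
  have hle : ‖x‖ ≤ K * ‖T x - μ • x‖ := by simpa using hK.le_mul_dist x 0
  nlinarith [norm_nonneg (T x - μ • x)]

end IsCompactOperator

end NormedSpace

section InnerProductSpace

variable {𝕜 E : Type*} [RCLike 𝕜] [NormedAddCommGroup E] [InnerProductSpace 𝕜 E]

theorem norm_le_norm_sub_apply_gramSchmidtNormed_of_hasEigenvector {T : E →L[𝕜] E} {μ : ℕ → 𝕜}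
    (hμ : Function.Injective μ) {e : ℕ → E} (he : ∀ n, HasEigenvector (T : End 𝕜 E) (μ n) (e n))
    {m n : ℕ} (hmn : m < n) :
    ‖μ n‖ ≤ ‖T (gramSchmidtNormed 𝕜 e n) - T (gramSchmidtNormed 𝕜 e m)‖ := by
  set y := gramSchmidtNormed 𝕜 e
  have hy : Orthonormal 𝕜 y := gramSchmidtNormed_orthonormal
    (eigenvectors_linearIndependent' (T : End 𝕜 E) μ hμ e he)
  have hy_mem : ∀ k, y k ∈ span 𝕜 (e '' Iic k) := fun k => by
    rw [← span_gramSchmidt_Iic, ← span_gramSchmidtNormed]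
    exact subset_span ⟨k, mem_Iic.2 le_rfl, rfl⟩
  have hM_ortho : span 𝕜 (e '' Iio n) ≤ (𝕜 ∙ y n)ᗮ := by
    rw [← span_gramSchmidt_Iio, ← span_gramSchmidtNormed, span_le]
    rintro _ ⟨k, hk, rfl⟩
    exact mem_orthogonal_singleton_iff_inner_right.2 (hy.2 (ne_of_gt hk))
  set M := span 𝕜 (e '' Iio n)
  have hT_M : M ≤ M.comap (T : E →ₗ[𝕜] E) := by
    rw [span_le]
    rintro _ ⟨k, hk, rfl⟩
    show (T : End 𝕜 E) (e k) ∈ M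
    rw [(he k).apply_eq_smul]
    exact smul_mem _ _ (subset_span ⟨k, hk, rfl⟩)
  have hTμ_M : span 𝕜 (e '' Iic n) ≤ M.comap ((T - μ n • 1 : E →L[𝕜] E) : E →ₗ[𝕜] E) := by
    rw [span_le]
    rintro _ ⟨k, hk, rfl⟩
    show (T : End 𝕜 E) (e k) - μ n • e k ∈ M
    rw [(he k).apply_eq_smul, ← sub_smul]
    rcases (mem_Iic.1 hk).lt_or_eq with hk | rfl
    · exact smul_mem _ _ (subset_span ⟨k, hk, rfl⟩)
    · simp
  -- `y n ⊥ M`, while both `T (y n) - μ n • y n` and `T (y m)` lie in `M`.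
  set w := (T - μ n • 1) (y n) - T (y m)
  have hw : w ∈ M := sub_mem (hTμ_M (hy_mem n))
    (hT_M (span_mono (image_mono (Iic_subset_Iio.2 hmn)) (hy_mem m)))
  have hsplit : T (y n) - T (y m) = μ n • y n + w := by
    simp only [w, sub_apply, smul_apply, one_apply_eq_self]
    abel
  have hinner : ⟪μ n • y n, w⟫_𝕜 = 0 := by
    rw [inner_smul_left, mem_orthogonal_singleton_iff_inner_right.1 (hM_ortho hw), mul_zero]
  have hpyth := norm_add_sq_eq_norm_sq_add_norm_sq_of_inner_eq_zero _ _ hinner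
  rw [norm_smul, hy.1 n, mul_one] at hpyth
  rw [hsplit]
  nlinarith [norm_nonneg (μ n • y n + w), norm_nonneg (μ n), mul_self_nonneg ‖w‖]

namespace IsCompactOperator

theorem finite_setOf_hasEigenvalue_le_norm {T : E →L[𝕜] E} (hT : IsCompactOperator T) {r : ℝ}
    (hr : 0 < r) : {μ | HasEigenvalue (T : End 𝕜 E) μ ∧ r ≤ ‖μ‖}.Finite := by
  by_contra hinf
  set μ : ℕ ↪ _ := Set.Infinite.natEmbedding _ hinf
  have hμ : Function.Injective (fun n => (μ n : 𝕜)) := Subtype.val_injective.comp μ.injective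
  choose e he using fun n => (μ n).2.1.exists_hasEigenvector
  set y := gramSchmidtNormed 𝕜 e
  have hy : ∀ n, ‖y n‖ = 1 := fun n =>
    gramSchmidtNormed_unit_length n (eigenvectors_linearIndependent' (T : End 𝕜 E) _ hμ e he)
  have hsep : ∀ m n, m < n → r ≤ dist (T (y n)) (T (y m)) := fun m n hmn =>
    (μ n).2.2.trans <| (dist_eq_norm (T (y n)) (T (y m))).symm ▸
      norm_le_norm_sub_apply_gramSchmidtNormed_of_hasEigenvector hμ he hmn
  obtain ⟨K, hK, hKT⟩ := hT.image_closedBall_subset_compact 1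
  have : Finite ℕ := finite_of_isCompact_of_pairwise_le_dist hK
    (fun n => hKT ⟨y n, mem_closedBall_zero_iff.2 (hy n).le, rfl⟩) hr fun m n hmn =>
      hmn.lt_or_gt.elim (fun h => (hsep m n h).trans_eq (dist_comm _ _)) (hsep n m)
  exact not_finite ℕ

end IsCompactOperator

section Adjoint

variable {F : Type*} [NormedAddCommGroup F] [InnerProductSpace 𝕜 F] [CompleteSpace E]
  [CompleteSpace F]

theorem norm_adjoint_comp_apply_sub_smul_sq_le {A B : E →L[𝕜] F} (hA : ‖A‖ ≤ 1) (hB : ‖B‖ ≤ 1)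
    {ν : 𝕜} (hν : ‖ν‖ ≤ 1) (x : E) :
    ‖(A† ∘L B) x - ν • x‖ ^ 2 ≤ 4 * ‖x‖ ^ 2 - ‖(A + conj ν • B) x‖ ^ 2 := by
  have hre : RCLike.re ⟪(A† ∘L B) x, ν • x⟫_𝕜 = RCLike.re ⟪A x, conj ν • B x⟫_𝕜 := by
    rw [inner_smul_right, inner_smul_right, comp_apply, adjoint_inner_left, ← RCLike.conj_re,
      map_mul, inner_conj_symm]
  have hC : ‖A† ∘L B‖ ≤ 1 := (opNorm_comp_le _ _).trans <| by
    rw [LinearIsometryEquiv.norm_map]; nlinarith [norm_nonneg A, norm_nonneg B]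
  have hCx : ‖(A† ∘L B) x‖ ≤ ‖x‖ := by simpa using (A† ∘L B).le_of_opNorm_le hC x
  have hAx : ‖A x‖ ≤ ‖x‖ := by simpa using A.le_of_opNorm_le hA x
  have hBx : ‖conj ν • B x‖ ≤ ‖x‖ := by
    rw [norm_smul, RCLike.norm_conj]
    nlinarith [B.le_of_opNorm_le hB x, norm_nonneg ν, norm_nonneg (B x)]
  have hνx : ‖ν • x‖ ≤ ‖x‖ := by
    rw [norm_smul]; exact mul_le_of_le_one_left (norm_nonneg x) hν
  rw [norm_sub_sq (𝕜 := 𝕜), add_apply, smul_apply, norm_add_sq (𝕜 := 𝕜), hre]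
  nlinarith [pow_le_pow_left₀ (norm_nonneg _) hCx 2, pow_le_pow_left₀ (norm_nonneg _) hAx 2,
    pow_le_pow_left₀ (norm_nonneg _) hBx 2, pow_le_pow_left₀ (norm_nonneg _) hνx 2]

theorem hasEigenvalue_adjoint_comp_of_norm_add_smul_eq_two {A B : E →L[𝕜] F}
    (hBc : IsCompactOperator B) (hA : ‖A‖ ≤ 1) (hB : ‖B‖ ≤ 1) {ν : 𝕜} (hν : ‖ν‖ = 1)
    (h : ‖A + conj ν • B‖ = 2) : HasEigenvalue ((A† ∘L B : E →L[𝕜] E) : End 𝕜 E) ν := by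
  refine IsCompactOperator.hasEigenvalue_of_forall_exists_norm_sub_smul_lt (hBc.clm_comp (A†))
    (norm_ne_zero_iff.1 (hν ▸ one_ne_zero)) fun ε hε => ?_
  obtain ⟨x, hx⟩ := (A + conj ν • B).exists_mul_lt_of_lt_opNorm (Real.sqrt_nonneg (4 - ε ^ 2))
    (by rw [h, Real.sqrt_lt' two_pos]; nlinarith)
  refine ⟨x, lt_of_pow_lt_pow_left₀ 2 (by positivity) ?_⟩
  have hsq : (4 - ε ^ 2) * ‖x‖ ^ 2 < ‖(A + conj ν • B) x‖ ^ 2 := by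
    have := pow_lt_pow_left₀ hx (by positivity) two_ne_zero
    rw [mul_pow, Real.sq_sqrt'] at this
    nlinarith [le_max_left (4 - ε ^ 2) 0, sq_nonneg ‖x‖]
  nlinarith [norm_adjoint_comp_apply_sub_smul_sq_le hA hB hν.le x]

end Adjoint

end InnerProductSpace

theorem no_isometric_embedding_l12_into_compacts_general
    {H : Type*} [NormedAddCommGroup H] [InnerProductSpace ℂ H] [CompleteSpace H] :
    ¬ ∃ J : (Fin 2 → ℂ) →ₗ[ℂ] (H →L[ℂ] H),
      (∀ a, IsCompactOperator (J a)) ∧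
      (∀ a : Fin 2 → ℂ, ‖J a‖ = ‖a 0‖ + ‖a 1‖) := by
  rintro ⟨J, hJc, hJn⟩
  set A := J (Pi.single 0 1)
  set B := J (Pi.single 1 1)
  have hAB : ∀ c : ℂ, ‖A + c • B‖ = 1 + ‖c‖ := fun c => by
    rw [← map_smul, ← map_add, hJn]; simp
  have hA : ‖A‖ = 1 := by simpa using hAB 0
  have hB : ‖B‖ = 1 := by simpa using hJn (Pi.single 1 1)
  have hcircle : (sphere (0 : ℂ) 1).Infinite :=
    (isConnected_sphere (by simp [Complex.rank_real_complex]) 0 zero_le_one).isPreconnected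
      |>.infinite_of_nontrivial ⟨1, by simp, -1, by simp, by norm_num⟩
  have hsub : sphere (0 : ℂ) 1 ⊆
      {ν | HasEigenvalue ((A† ∘L B : H →L[ℂ] H) : End ℂ H) ν ∧ 1 ≤ ‖ν‖} := fun ν hν => by
    rw [mem_sphere_zero_iff_norm] at hν
    refine ⟨hasEigenvalue_adjoint_comp_of_norm_add_smul_eq_two (hJc _) hA.le hB.le hν ?_, hν.ge⟩
    rw [hAB, RCLike.norm_conj, hν]; norm_num
  exact hcircle.mono hsub (((hJc _).clm_comp (A†)).finite_setOf_hasEigenvalue_le_norm one_pos)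

/-- Let `H` be a complex separable Hilbert space with `dim H ≥ 2`.  Then `ℓ_1²(ℂ)` does
not embed isometrically into `S_∞(H)`: there is no linear map `J` from `ℂ²` to the
compact operators on `H` with `‖J a‖ = |a₁| + |a₂|` for all `a ∈ ℂ²`. -/
theorem no_isometric_embedding_l12_into_compacts
    {H : Type*} [NormedAddCommGroup H] [InnerProductSpace ℂ H] [CompleteSpace H]
    [TopologicalSpace.SeparableSpace H] (hdim : 2 ≤ Module.rank ℂ H) :
    ¬ ∃ J : (Fin 2 → ℂ) →ₗ[ℂ] (H →L[ℂ] H),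
      (∀ a, IsCompactOperator (J a)) ∧
      (∀ a : Fin 2 → ℂ, ‖J a‖ = ‖a 0‖ + ‖a 1‖) :=
  no_isometric_embedding_l12_into_compacts_general
end

section
/- Let n ≥ 1 be an integer and let p, q ∈ (0,∞). Suppose there exists a linear map T : ℂ² → M_n(ℂ) such that (Tr((T(a)*T(a))^{p/2}))^{1/p} = (|a₁|^q + |a₂|^q)^{1/q} for all a = (a₁, a₂) ∈ ℂ². Then there exist Hermitian matrices A, B ∈ M_{2n}(ℂ) such that Tr(((A+tB)²)^{p/2}) = (1 + |t|^q)^{p/q} for all t ∈ ℝ. -/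
open scoped Matrix

/-!
Scale `T` so that `c ^ p = 1 / 2` and take the Hermitian dilations `A = H(T(c, 0))`,
`B = H(T(0, c))`, where `H(N) = [[0, N], [Nᴴ, 0]]`. Since `H(N)ᴴ H(N) = diag(N Nᴴ, Nᴴ N)` and
`N Nᴴ`, `Nᴴ N` have the same characteristic polynomial, `‖H(N)‖_p^p = 2 ‖N‖_p^p`. As `H` is
real linear, `A + t B = H(T(c, t c))`, whence
`Tr(|A + t B|^p) = 2 (c^q + |t|^q c^q)^{p/q} = (1 + |t|^q)^{p/q}`.
-/

open Matrix Polynomial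

theorem Real.eq_rpow_div_of_rpow_one_div_eq {x y p q : ℝ} (hx : 0 ≤ x) (hy : 0 ≤ y)
    (hp : p ≠ 0) (h : x ^ (1 / p) = y ^ (1 / q)) : x = y ^ (p / q) := by
  calc x = (x ^ (1 / p)) ^ p := by rw [← Real.rpow_mul hx, one_div_mul_cancel hp, Real.rpow_one]
    _ = y ^ (p / q) := by rw [h, ← Real.rpow_mul hy, one_div_mul_eq_div]

theorem Real.rpow_add_mul_rpow_rpow_div {c s : ℝ} (p : ℝ) {q : ℝ} (hc : 0 ≤ c) (hs : 0 ≤ s)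
    (hq : q ≠ 0) : (c ^ q + (c * s) ^ q) ^ (p / q) = c ^ p * (1 + s ^ q) ^ (p / q) := by
  have hsq : 0 ≤ 1 + s ^ q := add_nonneg zero_le_one (Real.rpow_nonneg hs q)
  rw [Real.mul_rpow hc hs, ← mul_one_add, Real.mul_rpow (Real.rpow_nonneg hc q) hsq,
    ← Real.rpow_mul hc, mul_div_cancel₀ p hq]

theorem Matrix.IsHermitian.sum_eigenvalues_eq_sum_roots {m : Type*} [Fintype m] [DecidableEq m]
    {H : Matrix m m ℂ} (hH : H.IsHermitian) (f : ℝ → ℝ) :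
    ∑ i, f (hH.eigenvalues i) = (H.charpoly.roots.map fun z => f z.re).sum := by
  rw [hH.roots_charpoly_eq_eigenvalues, Multiset.map_map, Finset.sum_eq_multiset_sum]
  simp [Function.comp_def]

section schattenSum

variable {n : ℕ}

theorem schattenSum_nonneg (p : ℝ) (A : Matrix (Fin n) (Fin n) ℂ) : 0 ≤ schattenSum p A :=
  Finset.sum_nonneg fun i _ =>
    Real.rpow_nonneg (eigenvalues_conjTranspose_mul_self_nonneg A i) _

theorem schattenSum_eq_sum_roots (p : ℝ) (A : Matrix (Fin n) (Fin n) ℂ) :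
    schattenSum p A = ((Aᴴ * A).charpoly.roots.map fun z => z.re ^ (p / 2)).sum :=
  (isHermitian_conjTranspose_mul_self A).sum_eigenvalues_eq_sum_roots (· ^ (p / 2))

def finSumSelfEquivTwoMul (n : ℕ) : Fin n ⊕ Fin n ≃ Fin (2 * n) :=
  finSumFinEquiv.trans (finCongr (two_mul n).symm)

noncomputable def hermitianDilation (N : Matrix (Fin n) (Fin n) ℂ) :
    Matrix (Fin (2 * n)) (Fin (2 * n)) ℂ :=
  reindex (finSumSelfEquivTwoMul n) (finSumSelfEquivTwoMul n) (fromBlocks 0 N Nᴴ 0)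

theorem isHermitian_hermitianDilation (N : Matrix (Fin n) (Fin n) ℂ) :
    (hermitianDilation N).IsHermitian := by
  rw [IsHermitian, hermitianDilation, reindex_apply, conjTranspose_submatrix,
    fromBlocks_conjTranspose]
  simp

theorem hermitianDilation_add_ofReal_smul (M N : Matrix (Fin n) (Fin n) ℂ) (t : ℝ) :
    hermitianDilation (M + (t : ℂ) • N) = hermitianDilation M + (t : ℂ) • hermitianDilation N := by
  have hblocks : fromBlocks 0 (M + (t : ℂ) • N) (M + (t : ℂ) • N)ᴴ 0
      = fromBlocks 0 M Mᴴ 0 + (t : ℂ) • fromBlocks 0 N Nᴴ (0 : Matrix (Fin n) (Fin n) ℂ) := by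
    simp [fromBlocks_smul, fromBlocks_add, conjTranspose_smul]
  rw [hermitianDilation, hblocks]
  rfl

theorem schattenSum_hermitianDilation (p : ℝ) (N : Matrix (Fin n) (Fin n) ℂ) :
    schattenSum p (hermitianDilation N) = 2 * schattenSum p N := by
  have hsq : (hermitianDilation N)ᴴ * hermitianDilation N
      = reindex (finSumSelfEquivTwoMul n) (finSumSelfEquivTwoMul n)
          (fromBlocks (N * Nᴴ) 0 0 (Nᴴ * N)) := by
    rw [hermitianDilation, reindex_apply, conjTranspose_submatrix, submatrix_mul_equiv,
      fromBlocks_conjTranspose, fromBlocks_multiply]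
    simp
  rw [schattenSum_eq_sum_roots, hsq, charpoly_reindex, charpoly_fromBlocks_zero₁₂,
    roots_mul ((charpoly_monic _).mul (charpoly_monic _)).ne_zero, Multiset.map_add,
    Multiset.sum_add, charpoly_mul_comm N Nᴴ, ← schattenSum_eq_sum_roots, two_mul]

end schattenSum

theorem hermitian_pair_from_embedding_general (n : ℕ) (p q : ℝ)
    (hp : 0 < p) (hq : 0 < q)
    (hT : ∃ T : (Fin 2 → ℂ) →ₗ[ℂ] Matrix (Fin n) (Fin n) ℂ,
      ∀ a : Fin 2 → ℂ,
        schattenSum p (T a) ^ (1 / p)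
          = (‖a 0‖ ^ q + ‖a 1‖ ^ q) ^ (1 / q)) :
    ∃ A B : Matrix (Fin (2 * n)) (Fin (2 * n)) ℂ, A.IsHermitian ∧ B.IsHermitian ∧
      ∀ t : ℝ, schattenSum p (A + (t : ℂ) • B) = (1 + |t| ^ q) ^ (p / q) := by
  obtain ⟨T, hT⟩ := hT
  set c : ℝ := (1 / 2) ^ p⁻¹
  have hc : 0 ≤ c := Real.rpow_nonneg (by norm_num) _
  have hcp : c ^ p = 1 / 2 := Real.rpow_inv_rpow (by norm_num) hp.ne'
  refine ⟨hermitianDilation (T ![c, 0]), hermitianDilation (T ![0, c]),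
    isHermitian_hermitianDilation _, isHermitian_hermitianDilation _, fun t => ?_⟩
  have hT_line : T ![c, 0] + (t : ℂ) • T ![0, c] = T ![c, c * t] := by
    rw [← map_smul, ← map_add]
    congr 1
    ext i
    fin_cases i <;> simp [mul_comm]
  rw [← hermitianDilation_add_ofReal_smul, hT_line, schattenSum_hermitianDilation,
    Real.eq_rpow_div_of_rpow_one_div_eq (schattenSum_nonneg p _) (by positivity) hp.ne' (hT _)]
  simp only [cons_val_zero, cons_val_one, ← Complex.ofReal_mul, Complex.norm_real,
    Real.norm_eq_abs, abs_mul, abs_of_nonneg hc]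
  rw [Real.rpow_add_mul_rpow_rpow_div p hc (abs_nonneg t) hq.ne', hcp]
  ring

/-- Let `n ≥ 1` and `p, q ∈ (0,∞)`.  If there is a linear `T : ℂ² → M_n(ℂ)` with
`(Tr((T(a)*T(a))^{p/2}))^{1/p} = (|a₁|^q + |a₂|^q)^{1/q}` for all `a ∈ ℂ²`, then there
are Hermitian `A, B ∈ M_{2n}(ℂ)` with `Tr(((A+tB)²)^{p/2}) = (1+|t|^q)^{p/q}` for all
real `t`. -/
theorem hermitian_pair_from_embedding (n : ℕ) (hn : 1 ≤ n) (p q : ℝ)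
    (hp : 0 < p) (hq : 0 < q)
    (hT : ∃ T : (Fin 2 → ℂ) →ₗ[ℂ] Matrix (Fin n) (Fin n) ℂ,
      ∀ a : Fin 2 → ℂ,
        schattenSum p (T a) ^ (1 / p)
          = (‖a 0‖ ^ q + ‖a 1‖ ^ q) ^ (1 / q)) :
    ∃ A B : Matrix (Fin (2 * n)) (Fin (2 * n)) ℂ, A.IsHermitian ∧ B.IsHermitian ∧
      ∀ t : ℝ, schattenSum p (A + (t : ℂ) • B) = (1 + |t| ^ q) ^ (p / q) :=
  hermitian_pair_from_embedding_general n p q hp hq hT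
end
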